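/- arXiv:2505.21306 — 7 statements merged into one kernel-verified Lean document; each statement's English description precedes it below -/
import Mathlib

section
/- In the (1:K_m)-biased triangle game on K_n (Maker moving first), if m ≥ 4√n then Breaker has a winning strategy. -/
open Finset

/-- A position in a Maker–Breaker game on the edge set of `K_n`:
`M` is the set of edges claimed by Maker, `B` those claimed by Breaker. -/
structure MBPos (n : ℕ) where
  M : Finset (Sym2 (Fin n))
  B : Finset (Sym2 (Fin n))

/-- The board: the edge set of the complete graph `K_n`, i.e. all
non-diagonal unordered pairs of vertices. -/
def board (n : ℕ) : Finset (Sym2 (Fin n)) :=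
  Finset.univ.filter (fun e => ¬ e.IsDiag)

/-- Maker claims edge `e` if it is a previously unclaimed edge of the board;
an illegal choice leaves the position unchanged (this never helps Maker,
whose goal is monotone in her set of edges). -/
def makerMove {n : ℕ} (p : MBPos n) (e : Sym2 (Fin n)) : MBPos n :=
  if e ∈ board n ∧ e ∉ p.M ∧ e ∉ p.B then ⟨insert e p.M, p.B⟩ else p

/-- Breaker claims the set `S` of edges. -/
def breakerMove {n : ℕ} (p : MBPos n) (S : Finset (Sym2 (Fin n))) : MBPos n :=
  ⟨p.M, p.B ∪ S⟩

/-- A Breaker strategy `bs` is legal for the bias-structure predicate `ok` if at every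
position it claims a set of previously unclaimed edges of the board satisfying `ok`. -/
def LegalBreaker {n : ℕ} (ok : Finset (Sym2 (Fin n)) → Prop)
    (bs : MBPos n → Finset (Sym2 (Fin n))) : Prop :=
  ∀ p : MBPos n, bs p ⊆ board n ∧ (∀ e ∈ bs p, e ∉ p.M ∧ e ∉ p.B) ∧ ok (bs p)

/-- The sequence of positions (one per half-move) when Breaker moves first:
at even steps Breaker moves, at odd steps Maker moves. -/
def playBF {n : ℕ} (ms : MBPos n → Sym2 (Fin n)) (bs : MBPos n → Finset (Sym2 (Fin n))) :
    ℕ → MBPos n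
  | 0 => ⟨∅, ∅⟩
  | k + 1 =>
    let p := playBF ms bs k
    if k % 2 = 0 then breakerMove p (bs p) else makerMove p (ms p)

/-- The sequence of positions (one per half-move) when Maker moves first:
at even steps Maker moves, at odd steps Breaker moves. -/
def playMF {n : ℕ} (ms : MBPos n → Sym2 (Fin n)) (bs : MBPos n → Finset (Sym2 (Fin n))) :
    ℕ → MBPos n
  | 0 => ⟨∅, ∅⟩
  | k + 1 =>
    let p := playMF ms bs k
    if k % 2 = 0 then makerMove p (ms p) else breakerMove p (bs p)

/-- Maker (moving second, Breaker first) has a winning strategy: some Maker strategy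
guarantees, against every legal Breaker strategy, that at some point Maker's claimed
edges satisfy the winning predicate `win`. -/
def MakerWinsBF {n : ℕ} (ok : Finset (Sym2 (Fin n)) → Prop)
    (win : Finset (Sym2 (Fin n)) → Prop) : Prop :=
  ∃ ms, ∀ bs, LegalBreaker ok bs → ∃ t, win (playBF ms bs t).M

/-- Maker (moving first) has a winning strategy. -/
def MakerWinsMF {n : ℕ} (ok : Finset (Sym2 (Fin n)) → Prop)
    (win : Finset (Sym2 (Fin n)) → Prop) : Prop :=
  ∃ ms, ∀ bs, LegalBreaker ok bs → ∃ t, win (playMF ms bs t).M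

/-- Breaker (moving second, Maker first) has a winning strategy: some legal Breaker
strategy guarantees that Maker's claimed edges never satisfy `win`. -/
def BreakerWinsMF {n : ℕ} (ok : Finset (Sym2 (Fin n)) → Prop)
    (win : Finset (Sym2 (Fin n)) → Prop) : Prop :=
  ∃ bs, LegalBreaker ok bs ∧ ∀ ms, ∀ t, ¬ win (playMF ms bs t).M

/-- Breaker (moving first) has a winning strategy. -/
def BreakerWinsBF {n : ℕ} (ok : Finset (Sym2 (Fin n)) → Prop)
    (win : Finset (Sym2 (Fin n)) → Prop) : Prop :=
  ∃ bs, LegalBreaker ok bs ∧ ∀ ms, ∀ t, ¬ win (playBF ms bs t).M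

/-- `(1:K_m)` clique bias: the claimed edges all have their endpoints inside a
single set of at most `m` vertices (i.e. they form a subgraph of a copy of `K_m`). -/
def CliqueBias {n : ℕ} (m : ℕ) (S : Finset (Sym2 (Fin n))) : Prop :=
  ∃ V : Finset (Fin n), V.card ≤ m ∧ ∀ e ∈ S, ∀ v : Fin n, v ∈ e → v ∈ V

/-- `(1:E_b)` matching bias: at most `b` pairwise vertex-disjoint edges. -/
def MatchingBias {n : ℕ} (b : ℕ) (S : Finset (Sym2 (Fin n))) : Prop :=
  S.card ≤ b ∧ ∀ e ∈ S, ∀ f ∈ S, e ≠ f → ∀ v : Fin n, v ∈ e → v ∉ f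

/-- `(1:S_b)` star bias: at most `b` edges sharing a common endpoint (the center). -/
def StarBias {n : ℕ} (b : ℕ) (S : Finset (Sym2 (Fin n))) : Prop :=
  S.card ≤ b ∧ ∃ v : Fin n, ∀ e ∈ S, v ∈ e

/-- Winning predicate for the triangle game: Maker's edges contain a triangle. -/
def TriangleWin {n : ℕ} (M : Finset (Sym2 (Fin n))) : Prop :=
  ∃ u v w : Fin n, u ≠ v ∧ u ≠ w ∧ v ≠ w ∧
    s(u, v) ∈ M ∧ s(u, w) ∈ M ∧ s(v, w) ∈ M

/-- Winning predicate for the connectivity game: Maker's edges form a connected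
spanning subgraph of `K_n`. -/
def ConnWin {n : ℕ} (M : Finset (Sym2 (Fin n))) : Prop :=
  (SimpleGraph.fromEdgeSet (M : Set (Sym2 (Fin n)))).Connected

/-- Winning predicate for the Hamiltonicity game: Maker's edges contain a
Hamilton cycle. -/
def HamWin {n : ℕ} (M : Finset (Sym2 (Fin n))) : Prop :=
  ∃ (a : Fin n) (p : (SimpleGraph.fromEdgeSet (M : Set (Sym2 (Fin n)))).Walk a a),
    p.IsHamiltonianCycle

/-- The degree of vertex `v` in the graph given by the edge set `E`. -/
def degIn {n : ℕ} (E : Finset (Sym2 (Fin n))) (v : Fin n) : ℕ :=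
  (E.filter (fun e => v ∈ e)).card

/-!
Put `q = ⌊√(n - 2)⌋ + 1`. After each of his moves Breaker keeps two properties: every Maker
cherry `x a y` is closed (Breaker owns `xy`), and every vertex that still has a free edge is
balanced, i.e. its Breaker degree is at least `q - 1` times its Maker degree. Balance caps the
Maker degree of a vertex with a free edge at `(n - 2) / q`. When Maker then claims `uv`, every
new cherry is centred at `u` or `v` and only `u` and `v` can lose balance, so Breaker restores
both properties by claiming the free edges inside a vertex set contained in
`N(u) ∪ N(v) ∪ R(u) ∪ R(v)`, where `N` is the Maker neighbourhood and `R(x)` consists of up to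
`q - 1` free neighbours of `x`. As `u ∈ N(v)` and `v ∈ N(u)`, this set has at most
`2 (n - 2) / q + 2 q ≤ 4 √n ≤ m` vertices.
-/

namespace CliqueBiasTriangle

variable {n : ℕ}

section Game

variable (ms : MBPos n → Sym2 (Fin n)) (bs : MBPos n → Finset (Sym2 (Fin n))) (k : ℕ)

lemma playMF_two_mul_add_one :
    playMF ms bs (2 * k + 1) = makerMove (playMF ms bs (2 * k)) (ms (playMF ms bs (2 * k))) := by
  rw [playMF, if_pos (by omega)]

lemma playMF_two_mul_add_two :
    playMF ms bs (2 * k + 2) =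
      breakerMove (playMF ms bs (2 * k + 1)) (bs (playMF ms bs (2 * k + 1))) := by
  rw [playMF, if_neg (by omega)]

end Game

theorem breakerWinsMF_of_invariant {ok win : Finset (Sym2 (Fin n)) → Prop}
    {bs : MBPos n → Finset (Sym2 (Fin n))}
    (hbs : LegalBreaker ok bs) (I : MBPos n → Prop) (h0 : I ⟨∅, ∅⟩)
    (hwin : ∀ p, I p → ¬ win p.M) (hmaker : ∀ p e, I p → ¬ win (makerMove p e).M)
    (hstep : ∀ p e, I p → I (breakerMove (makerMove p e) (bs (makerMove p e)))) :
    BreakerWinsMF ok win := by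
  refine ⟨bs, hbs, fun ms t => ?_⟩
  have hI : ∀ k, I (playMF ms bs (2 * k)) := by
    intro k
    induction k with
    | zero => exact h0
    | succ k ih =>
      rw [show 2 * (k + 1) = 2 * k + 2 by ring, playMF_two_mul_add_two, playMF_two_mul_add_one]
      exact hstep _ _ ih
  obtain ⟨k, rfl | rfl⟩ := Nat.even_or_odd' t
  · exact hwin _ (hI k)
  · rw [playMF_two_mul_add_one]
    exact hmaker _ _ (hI k)

lemma mk_mem_board {a b : Fin n} : s(a, b) ∈ board n ↔ a ≠ b := by
  simp [board]

def nbrs (E : Finset (Sym2 (Fin n))) (x : Fin n) : Finset (Fin n) :=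
  univ.filter fun y => y ≠ x ∧ s(x, y) ∈ E

def freeNbrs (p : MBPos n) (x : Fin n) : Finset (Fin n) :=
  univ.filter fun y => y ≠ x ∧ s(x, y) ∉ p.M ∧ s(x, y) ∉ p.B

@[simp]
lemma mem_nbrs {E : Finset (Sym2 (Fin n))} {x y : Fin n} :
    y ∈ nbrs E x ↔ y ≠ x ∧ s(x, y) ∈ E := by
  simp [nbrs]

@[simp]
lemma mem_freeNbrs {p : MBPos n} {x y : Fin n} :
    y ∈ freeNbrs p x ↔ y ≠ x ∧ s(x, y) ∉ p.M ∧ s(x, y) ∉ p.B := by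
  simp [freeNbrs]

lemma nbrs_mono {E E' : Finset (Sym2 (Fin n))} (h : E ⊆ E') (x : Fin n) :
    nbrs E x ⊆ nbrs E' x := fun _ hy =>
  mem_nbrs.mpr ⟨(mem_nbrs.mp hy).1, h (mem_nbrs.mp hy).2⟩

lemma freeNbrs_anti {p p' : MBPos n} (hM : p.M ⊆ p'.M) (hB : p.B ⊆ p'.B) (x : Fin n) :
    freeNbrs p' x ⊆ freeNbrs p x := by
  intro y hy
  simp only [mem_freeNbrs] at hy ⊢
  exact ⟨hy.1, fun h => hy.2.1 (hM h), fun h => hy.2.2 (hB h)⟩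

lemma nbrs_insert_of_notMem {E : Finset (Sym2 (Fin n))} {e : Sym2 (Fin n)} {x : Fin n}
    (hx : x ∉ e) : nbrs (insert e E) x = nbrs E x := by
  ext y
  simp only [mem_nbrs, mem_insert]
  refine and_congr_right fun _ => or_iff_right fun h => hx (h ▸ Sym2.mem_mk_left x y)

lemma card_nbrs_insert_le (E : Finset (Sym2 (Fin n))) (e : Sym2 (Fin n)) (x : Fin n) :
    #(nbrs (insert e E) x) ≤ #(nbrs E x) + 1 := by
  by_cases hx : x ∈ e
  · obtain ⟨w, rfl⟩ := Sym2.mem_iff_exists.mp hx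
    have : nbrs (insert s(x, w) E) x ⊆ insert w (nbrs E x) := by
      intro y hy
      obtain ⟨hyx, hy⟩ := mem_nbrs.mp hy
      rcases mem_insert.mp hy with h | h
      · rcases Sym2.eq_iff.mp h with ⟨-, rfl⟩ | ⟨-, rfl⟩
        · exact mem_insert_self _ _
        · exact absurd rfl hyx
      · exact mem_insert_of_mem (mem_nbrs.mpr ⟨hyx, h⟩)
    exact (card_le_card this).trans (card_insert_le _ _)
  · rw [nbrs_insert_of_notMem hx]
    exact Nat.le_succ _

lemma card_nbrs_add_card_nbrs_add_card_freeNbrs_le (p : MBPos n) (hMB : Disjoint p.M p.B)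
    (x : Fin n) : #(nbrs p.M x) + #(nbrs p.B x) + #(freeNbrs p x) ≤ n - 1 := by
  have hMB' : Disjoint (nbrs p.M x) (nbrs p.B x) :=
    disjoint_left.mpr fun _ hM hB => disjoint_left.mp hMB (mem_nbrs.mp hM).2 (mem_nbrs.mp hB).2
  have hF : Disjoint (nbrs p.M x ∪ nbrs p.B x) (freeNbrs p x) := by
    refine disjoint_left.mpr fun y hy hF => ?_
    obtain ⟨-, hyM, hyB⟩ := mem_freeNbrs.mp hF
    rcases mem_union.mp hy with h | h
    exacts [hyM (mem_nbrs.mp h).2, hyB (mem_nbrs.mp h).2]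
  have hsub : nbrs p.M x ∪ nbrs p.B x ∪ freeNbrs p x ⊆ univ.erase x := by
    intro y hy
    simp only [mem_union, mem_nbrs, mem_freeNbrs] at hy
    exact mem_erase.mpr ⟨by rcases hy with (h | h) | h <;> exact h.1, mem_univ y⟩
  have := card_le_card hsub
  rwa [card_union_of_disjoint hF, card_union_of_disjoint hMB', card_erase_of_mem (mem_univ x),
    card_univ, Fintype.card_fin] at this

def CherriesClosed (M B : Finset (Sym2 (Fin n))) : Prop :=
  ∀ a x y : Fin n, x ≠ y → s(a, x) ∈ M → s(a, y) ∈ M → s(x, y) ∈ B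

lemma CherriesClosed.mono {M B B' : Finset (Sym2 (Fin n))} (h : CherriesClosed M B)
    (hB : B ⊆ B') : CherriesClosed M B' := fun a x y hxy hx hy => hB (h a x y hxy hx hy)

lemma not_triangleWin_of_cherriesClosed {M B : Finset (Sym2 (Fin n))} (hMB : Disjoint M B)
    (hcl : CherriesClosed M B) : ¬ TriangleWin M := by
  rintro ⟨a, b, c, -, -, hbc, hab, hac, hbc'⟩
  exact disjoint_left.mp hMB hbc' (hcl a b c hbc hab hac)

lemma not_triangleWin_insert {M B : Finset (Sym2 (Fin n))} {e : Sym2 (Fin n)}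
    (hMB : Disjoint M B) (hcl : CherriesClosed M B) (he : e ∉ B) :
    ¬ TriangleWin (insert e M) := by
  -- if the third side were `e`, the other two would form a cherry of `M` closed by `e`
  have side_ne : ∀ x y w : Fin n, x ≠ y → x ≠ w → y ≠ w → s(x, w) ∈ insert e M →
      s(y, w) ∈ insert e M → s(x, y) ≠ e := by
    rintro x y w hxy hxw hyw hx hy rfl
    have hx' : s(x, w) ∈ M := (mem_insert.mp hx).resolve_left fun h => by
      rcases Sym2.eq_iff.mp h with ⟨-, h⟩ | ⟨h, -⟩ <;> simp_all
    have hy' : s(y, w) ∈ M := (mem_insert.mp hy).resolve_left fun h => by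
      rcases Sym2.eq_iff.mp h with ⟨h, -⟩ | ⟨-, h⟩ <;> simp_all
    exact he (hcl w x y hxy (Sym2.eq_swap ▸ hx') (Sym2.eq_swap ▸ hy'))
  rintro ⟨a, b, c, hab, hac, hbc, h1, h2, h3⟩
  have h1' := (mem_insert.mp h1).resolve_left (side_ne a b c hab hac hbc h2 h3)
  have h2' := (mem_insert.mp h2).resolve_left
    (side_ne a c b hac hab hbc.symm h1 (Sym2.eq_swap ▸ h3))
  have h3' := (mem_insert.mp h3).resolve_left
    (side_ne b c a hbc hab.symm hac.symm (Sym2.eq_swap ▸ h1) (Sym2.eq_swap ▸ h2))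
  exact not_triangleWin_of_cherriesClosed hMB hcl ⟨a, b, c, hab, hac, hbc, h1', h2', h3'⟩

def Balanced (q : ℕ) (p : MBPos n) (x : Fin n) : Prop :=
  (freeNbrs p x).Nonempty → (q - 1) * #(nbrs p.M x) ≤ #(nbrs p.B x)

instance (q : ℕ) (p : MBPos n) : DecidablePred (Balanced q p) := fun _ => by
  unfold Balanced; infer_instance

def AlmostBalanced (q : ℕ) (p : MBPos n) (x : Fin n) : Prop :=
  (freeNbrs p x).Nonempty → (q - 1) * #(nbrs p.M x) ≤ #(nbrs p.B x) + (q - 1)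

lemma Balanced.mono {q : ℕ} {p p' : MBPos n} {x : Fin n} (h : Balanced q p x)
    (hM : #(nbrs p'.M x) ≤ #(nbrs p.M x)) (hB : #(nbrs p.B x) ≤ #(nbrs p'.B x))
    (hF : freeNbrs p' x ⊆ freeNbrs p x) : Balanced q p' x := fun hne =>
  (Nat.mul_le_mul_left _ hM).trans ((h (hne.mono hF)).trans hB)

lemma Balanced.breakerMove {q : ℕ} {p : MBPos n} {x : Fin n} (h : Balanced q p x)
    (S : Finset (Sym2 (Fin n))) : Balanced q (_root_.breakerMove p S) x :=
  h.mono le_rfl (card_le_card (nbrs_mono subset_union_left x))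
    (freeNbrs_anti (p := p) (p' := _root_.breakerMove p S) subset_rfl subset_union_left x)

structure Safe (q : ℕ) (p : MBPos n) : Prop where
  disjoint : Disjoint p.M p.B
  maker_subset : p.M ⊆ board n
  cherriesClosed : CherriesClosed p.M p.B
  balanced : ∀ x, Balanced q p x

lemma safe_empty (q : ℕ) : Safe q (⟨∅, ∅⟩ : MBPos n) where
  disjoint := disjoint_empty_left _
  maker_subset := empty_subset _
  cherriesClosed := by simp [CherriesClosed]
  balanced x _ := by simp [nbrs]

namespace Safe

variable {q : ℕ} {p : MBPos n}

lemma not_triangleWin (hp : Safe q p) : ¬ TriangleWin p.M :=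
  not_triangleWin_of_cherriesClosed hp.disjoint hp.cherriesClosed

lemma not_triangleWin_makerMove (hp : Safe q p) (e : Sym2 (Fin n)) :
    ¬ TriangleWin (makerMove p e).M := by
  unfold makerMove
  split_ifs with he
  · exact not_triangleWin_insert hp.disjoint hp.cherriesClosed he.2.2
  · exact hp.not_triangleWin

lemma card_nbrs_le_of_mem_freeNbrs (hp : Safe q p) (hq : 1 ≤ q) {x y : Fin n}
    (hy : y ∈ freeNbrs p x) : #(nbrs p.M x) ≤ (n - 2) / q := by
  have hsum := card_nbrs_add_card_nbrs_add_card_freeNbrs_le p hp.disjoint x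
  have hbal := hp.balanced x ⟨y, hy⟩
  have hfree := card_pos.mpr ⟨y, hy⟩
  rw [Nat.le_div_iff_mul_le hq]
  obtain ⟨r, rfl⟩ := Nat.exists_eq_add_of_le hq
  simp only [Nat.add_sub_cancel_left] at hbal
  have : #(nbrs p.M x) * (1 + r) = #(nbrs p.M x) + r * #(nbrs p.M x) := by ring
  omega

lemma breakerMove_of_notMem {S : Finset (Sym2 (Fin n))} (hp : Safe q p)
    (hS : ∀ e ∈ S, e ∉ p.M) :
    Safe q (breakerMove p S) where
  disjoint := disjoint_union_right.mpr ⟨hp.disjoint, disjoint_right.mpr hS⟩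
  maker_subset := hp.maker_subset
  cherriesClosed := hp.cherriesClosed.mono subset_union_left
  balanced x := (hp.balanced x).breakerMove S

end Safe

def openClosings (p : MBPos n) : Finset (Sym2 (Fin n)) :=
  (board n).filter fun c => c ∉ p.M ∧ c ∉ p.B ∧
    ∃ a x y : Fin n, c = s(x, y) ∧ s(a, x) ∈ p.M ∧ s(a, y) ∈ p.M

lemma cherriesClosed_union_of_openClosings_subset {p : MBPos n} {S : Finset (Sym2 (Fin n))}
    (hM : p.M ⊆ board n) (htri : ¬ TriangleWin p.M) (hS : openClosings p ⊆ S) :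
    CherriesClosed p.M (p.B ∪ S) := by
  intro a x y hxy hx hy
  refine or_iff_not_imp_left.mpr (fun hB => hS ?_) |> mem_union.mpr
  have hax := mk_mem_board.mp (hM hx)
  have hay := mk_mem_board.mp (hM hy)
  exact mem_filter.mpr ⟨mk_mem_board.mpr hxy,
    fun hxy' => htri ⟨a, x, y, hax, hay, hxy, hx, hy, hxy'⟩,
    hB, a, x, y, rfl, hx, hy⟩

lemma mem_nbrs_of_mem_openClosings {M B : Finset (Sym2 (Fin n))} {u v z : Fin n}
    {c : Sym2 (Fin n)} (hM : insert s(u, v) M ⊆ board n) (hcl : CherriesClosed M B)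
    (hc : c ∈ openClosings ⟨insert s(u, v) M, B⟩) (hz : z ∈ c) :
    z ∈ nbrs (insert s(u, v) M) u ∪ nbrs (insert s(u, v) M) v := by
  obtain ⟨hcb, -, hcB, a, x, y, rfl, hx, hy⟩ := mem_filter.mp hc
  have ha : a = u ∨ a = v := by
    by_contra! ha
    have huv : a ∉ s(u, v) := by simpa [Sym2.mem_iff] using ha
    have hx' := (mem_insert.mp hx).resolve_left fun h => huv (h ▸ Sym2.mem_mk_left a x)
    have hy' := (mem_insert.mp hy).resolve_left fun h => huv (h ▸ Sym2.mem_mk_left a y)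
    exact hcB (hcl a x y (mk_mem_board.mp hcb) hx' hy')
  have hz' : z ∈ nbrs (insert s(u, v) M) a := by
    rcases Sym2.mem_iff.mp hz with rfl | rfl
    · exact mem_nbrs.mpr ⟨(mk_mem_board.mp (hM hx)).symm, hx⟩
    · exact mem_nbrs.mpr ⟨(mk_mem_board.mp (hM hy)).symm, hy⟩
  rcases ha with rfl | rfl
  exacts [mem_union_left _ hz', mem_union_right _ hz']

noncomputable def reserve (q : ℕ) (p : MBPos n) (x : Fin n) : Finset (Fin n) :=
  (exists_subset_card_eq (min_le_right (q - 1) #(freeNbrs p x))).choose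

lemma reserve_subset (q : ℕ) (p : MBPos n) (x : Fin n) : reserve q p x ⊆ freeNbrs p x :=
  (exists_subset_card_eq (min_le_right (q - 1) #(freeNbrs p x))).choose_spec.1

lemma card_reserve (q : ℕ) (p : MBPos n) (x : Fin n) :
    #(reserve q p x) = min (q - 1) #(freeNbrs p x) :=
  (exists_subset_card_eq (min_le_right (q - 1) #(freeNbrs p x))).choose_spec.2

lemma balanced_breakerMove_of_reserve {q : ℕ} {p : MBPos n} {S : Finset (Sym2 (Fin n))}
    {x : Fin n} (hx : AlmostBalanced q p x)
    (hS : ∀ y ∈ reserve q p x, s(x, y) ∈ S) : Balanced q (breakerMove p S) x := by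
  intro hne
  have hfree : freeNbrs (breakerMove p S) x ⊆ freeNbrs p x :=
    freeNbrs_anti (p := p) (p' := breakerMove p S) subset_rfl subset_union_left x
  by_cases hsmall : #(freeNbrs p x) ≤ q - 1
  · -- the reserve is the whole free neighbourhood, so no edge at `x` stays free
    have hres : reserve q p x = freeNbrs p x := eq_of_subset_of_card_le (reserve_subset q p x)
      (by rw [card_reserve, min_eq_right hsmall])
    obtain ⟨y, hy⟩ := hne
    exact ((mem_freeNbrs.mp hy).2.2 (mem_union_right _ (hS y (hres ▸ hfree hy)))).elim
  · have hdisj : Disjoint (nbrs p.B x) (reserve q p x) := disjoint_left.mpr fun y hB hR =>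
      (mem_freeNbrs.mp (reserve_subset q p x hR)).2.2 (mem_nbrs.mp hB).2
    have hsub : nbrs p.B x ∪ reserve q p x ⊆ nbrs (p.B ∪ S) x := union_subset
      (nbrs_mono subset_union_left x) fun y hy =>
        mem_nbrs.mpr ⟨(mem_freeNbrs.mp (reserve_subset q p x hy)).1,
          mem_union_right _ (hS y hy)⟩
    have hcard := card_le_card hsub
    rw [card_union_of_disjoint hdisj, card_reserve, min_eq_left (by omega)] at hcard
    exact (hx (hne.mono hfree)).trans hcard

noncomputable def breakerClique (q : ℕ) (p : MBPos n) : Finset (Fin n) :=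
  (openClosings p).biUnion Sym2.toFinset ∪
    (univ.filter fun x => ¬ Balanced q p x).biUnion fun x => insert x (reserve q p x)

/-- The `∅` branch is never reached in play, by `Safe.card_breakerClique_insert_le`. -/
noncomputable def cliqueStrategy (q m : ℕ) (p : MBPos n) : Finset (Sym2 (Fin n)) :=
  if #(breakerClique q p) ≤ m then
    (board n).filter fun e => e ∉ p.M ∧ e ∉ p.B ∧ ∀ z ∈ e, z ∈ breakerClique q p
  else ∅

lemma legalBreaker_cliqueStrategy (q m : ℕ) :
    LegalBreaker (n := n) (CliqueBias m) (cliqueStrategy q m) := by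
  intro p
  unfold cliqueStrategy
  split_ifs with h
  · exact ⟨filter_subset _ _, fun e he => ⟨(mem_filter.mp he).2.1, (mem_filter.mp he).2.2.1⟩,
      breakerClique q p, h, fun e he => (mem_filter.mp he).2.2.2⟩
  · exact ⟨empty_subset _, by simp, ∅, Nat.zero_le m, by simp⟩

lemma mem_cliqueStrategy {q m : ℕ} {p : MBPos n} {c : Sym2 (Fin n)}
    (hm : #(breakerClique q p) ≤ m) (hc : c ∈ board n) (hM : c ∉ p.M) (hB : c ∉ p.B)
    (hz : ∀ z ∈ c, z ∈ breakerClique q p) :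
    c ∈ cliqueStrategy q m p := by
  rw [cliqueStrategy, if_pos hm]
  exact mem_filter.mpr ⟨hc, hM, hB, hz⟩

lemma safe_breakerMove {q : ℕ} {p : MBPos n} {S : Finset (Sym2 (Fin n))}
    (hMB : Disjoint p.M p.B) (hM : p.M ⊆ board n) (htri : ¬ TriangleWin p.M)
    (hbal : ∀ x, AlmostBalanced q p x)
    (hSM : ∀ e ∈ S, e ∉ p.M) (hopen : openClosings p ⊆ S)
    (hres : ∀ x, ¬ Balanced q p x → ∀ y ∈ reserve q p x, s(x, y) ∈ S) :
    Safe q (breakerMove p S) where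
  disjoint := disjoint_union_right.mpr ⟨hMB, disjoint_right.mpr hSM⟩
  maker_subset := hM
  cherriesClosed := cherriesClosed_union_of_openClosings_subset hM htri hopen
  balanced x := by
    by_cases hx : Balanced q p x
    · exact hx.breakerMove S
    · exact balanced_breakerMove_of_reserve (hbal x) (hres x hx)

namespace Safe

variable {q : ℕ} {p : MBPos n}

lemma almostBalanced_insert (hp : Safe q p) (e : Sym2 (Fin n)) (x : Fin n) :
    AlmostBalanced q ⟨insert e p.M, p.B⟩ x := by
  intro hne
  have hbal := hp.balanced x (hne.mono (freeNbrs_anti (p := p) (p' := ⟨insert e p.M, p.B⟩)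
    (subset_insert _ _) subset_rfl x))
  calc (q - 1) * #(nbrs (insert e p.M) x) ≤ (q - 1) * (#(nbrs p.M x) + 1) :=
        Nat.mul_le_mul_left _ (card_nbrs_insert_le _ _ _)
    _ ≤ #(nbrs p.B x) + (q - 1) := by rw [mul_add_one]; omega

lemma mem_of_not_balanced_insert (hp : Safe q p) {e : Sym2 (Fin n)} {x : Fin n}
    (hx : ¬ Balanced q ⟨insert e p.M, p.B⟩ x) : x ∈ e := by
  by_contra hxe
  exact hx ((hp.balanced x).mono (congrArg card (nbrs_insert_of_notMem hxe)).le le_rfl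
    (freeNbrs_anti (p := p) (p' := ⟨insert e p.M, p.B⟩) (subset_insert _ _) subset_rfl x))

lemma breakerClique_insert_subset (hp : Safe q p) {u v : Fin n} (huv : s(u, v) ∈ board n) :
    breakerClique q ⟨insert s(u, v) p.M, p.B⟩ ⊆
      (nbrs (insert s(u, v) p.M) u ∪ reserve q ⟨insert s(u, v) p.M, p.B⟩ u) ∪
        (nbrs (insert s(u, v) p.M) v ∪ reserve q ⟨insert s(u, v) p.M, p.B⟩ v) := by
  have hu : u ∈ nbrs (insert s(u, v) p.M) v :=
    mem_nbrs.mpr ⟨mk_mem_board.mp huv, Sym2.eq_swap ▸ mem_insert_self _ _⟩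
  have hv : v ∈ nbrs (insert s(u, v) p.M) u :=
    mem_nbrs.mpr ⟨(mk_mem_board.mp huv).symm, mem_insert_self _ _⟩
  refine union_subset (biUnion_subset.mpr fun c hc z hz => ?_)
    (biUnion_subset.mpr fun x hx z hz => ?_)
  · have := mem_nbrs_of_mem_openClosings (insert_subset huv hp.maker_subset) hp.cherriesClosed hc
      (Sym2.mem_toFinset.mp hz)
    simp only [mem_union] at this ⊢
    tauto
  · have hx' := Sym2.mem_iff.mp (hp.mem_of_not_balanced_insert (mem_filter.mp hx).2)
    simp only [mem_insert, mem_union] at hz ⊢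
    rcases hx' with rfl | rfl <;> rcases hz with rfl | hz <;> tauto

lemma card_breakerClique_insert_le (hp : Safe q p) (hq : 1 ≤ q) {u v : Fin n}
    (huv : s(u, v) ∈ board n) (hM : s(u, v) ∉ p.M) (hB : s(u, v) ∉ p.B) :
    #(breakerClique q ⟨insert s(u, v) p.M, p.B⟩) ≤ 2 * ((n - 2) / q) + 2 * q := by
  have hdeg : ∀ x y, s(x, y) = s(u, v) →
      #(nbrs (insert s(u, v) p.M) x) ≤ (n - 2) / q + 1 := by
    intro x y hxy
    have hy : y ∈ freeNbrs p x :=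
      mem_freeNbrs.mpr ⟨(mk_mem_board.mp (hxy ▸ huv)).symm, hxy ▸ hM, hxy ▸ hB⟩
    exact (card_nbrs_insert_le _ _ _).trans (Nat.add_le_add_right
      (hp.card_nbrs_le_of_mem_freeNbrs hq hy) 1)
  have hres : ∀ x, #(reserve q ⟨insert s(u, v) p.M, p.B⟩ x) ≤ q - 1 := fun x =>
    (card_reserve _ _ x).trans_le (min_le_left _ _)
  have := hdeg u v rfl
  have := hdeg v u Sym2.eq_swap
  have := hres u
  have := hres v
  calc _ ≤ _ := card_le_card (hp.breakerClique_insert_subset huv)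
    _ ≤ _ := (card_union_le _ _).trans (add_le_add (card_union_le _ _) (card_union_le _ _))
    _ ≤ _ := by omega

lemma cliqueStrategy_step_insert (hp : Safe q p) {m : ℕ} {u v : Fin n}
    (hW : #(breakerClique q ⟨insert s(u, v) p.M, p.B⟩) ≤ m)
    (huv : s(u, v) ∈ board n) (hB : s(u, v) ∉ p.B) :
    Safe q (breakerMove ⟨insert s(u, v) p.M, p.B⟩
      (cliqueStrategy q m ⟨insert s(u, v) p.M, p.B⟩)) := by
  set P : MBPos n := ⟨insert s(u, v) p.M, p.B⟩
  refine safe_breakerMove (disjoint_insert_left.mpr ⟨hB, hp.disjoint⟩)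
    (insert_subset huv hp.maker_subset) (not_triangleWin_insert hp.disjoint hp.cherriesClosed hB)
    (hp.almostBalanced_insert _) (fun c hc => ((legalBreaker_cliqueStrategy q m P).2.1 c hc).1)
    (fun c hc => ?_) (fun x hx y hy => ?_)
  · obtain ⟨hcb, hcM, hcB, -⟩ := mem_filter.mp hc
    exact mem_cliqueStrategy hW hcb hcM hcB fun z hz =>
      mem_union_left _ (mem_biUnion.mpr ⟨c, hc, Sym2.mem_toFinset.mpr hz⟩)
  · obtain ⟨hyx, hyM, hyB⟩ := mem_freeNbrs.mp (reserve_subset q P x hy)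
    refine mem_cliqueStrategy hW (mk_mem_board.mpr hyx.symm) hyM hyB fun z hz =>
      mem_union_right _ (mem_biUnion.mpr ⟨x, mem_filter.mpr ⟨mem_univ x, hx⟩, ?_⟩)
    rcases Sym2.mem_iff.mp hz with rfl | rfl
    exacts [mem_insert_self _ _, mem_insert_of_mem hy]

lemma cliqueStrategy_step (hp : Safe q p) {m : ℕ} (hq : 1 ≤ q)
    (hm : 2 * ((n - 2) / q) + 2 * q ≤ m) (e : Sym2 (Fin n)) :
    Safe q (breakerMove (makerMove p e) (cliqueStrategy q m (makerMove p e))) := by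
  induction e using Sym2.ind with
  | _ u v =>
    by_cases hlegal : s(u, v) ∈ board n ∧ s(u, v) ∉ p.M ∧ s(u, v) ∉ p.B
    · obtain ⟨huv, hM, hB⟩ := hlegal
      rw [makerMove, if_pos ⟨huv, hM, hB⟩]
      exact hp.cliqueStrategy_step_insert
        ((hp.card_breakerClique_insert_le hq huv hM hB).trans hm) huv hB
    · rw [makerMove, if_neg hlegal]
      exact hp.breakerMove_of_notMem fun c hc => ((legalBreaker_cliqueStrategy q m p).2.1 c hc).1

end Safe

lemma lt_of_sq_lt_of_four_mul_sqrt_le {m k : ℕ} (h : 4 * √(n : ℝ) ≤ m)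
    (hk : k ^ 2 < 16 * n) :
    k < m := by
  have hk' : ((k : ℝ) / 4) ^ 2 < n := by
    have : ((k ^ 2 : ℕ) : ℝ) < ((16 * n : ℕ) : ℝ) := by exact_mod_cast hk
    push_cast at this
    nlinarith
  have := (Real.lt_sqrt (by positivity)).mpr hk'
  exact_mod_cast (show (k : ℝ) < m by linarith)

lemma exists_pos_two_mul_div_add_two_mul_le {m : ℕ} (hn : 0 < n) (h : 4 * √(n : ℝ) ≤ m) :
    ∃ q, 1 ≤ q ∧ 2 * ((n - 2) / q) + 2 * q ≤ m := by
  set s := Nat.sqrt (n - 2)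
  have hs : s * s ≤ n - 2 := Nat.sqrt_le (n - 2)
  have hs' : n - 2 < (s + 1) * (s + 1) := Nat.lt_succ_sqrt (n - 2)
  refine ⟨s + 1, by omega, ?_⟩
  by_cases hc : n - 2 < s * (s + 1)
  · have hdiv : (n - 2) / (s + 1) < s := (Nat.div_lt_iff_lt_mul (by omega)).mpr hc
    have : 4 * s < m := lt_of_sq_lt_of_four_mul_sqrt_le h (by
      rw [show (4 * s) ^ 2 = 16 * (s * s) by ring]; omega)
    omega
  · have hdiv : (n - 2) / (s + 1) < s + 1 := (Nat.div_lt_iff_lt_mul (by omega)).mpr hs'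
    have : 4 * s + 1 < m := lt_of_sq_lt_of_four_mul_sqrt_le h (by
      rw [show (4 * s + 1) ^ 2 = 16 * (s * s) + 8 * s + 1 by ring]
      rw [show s * (s + 1) = s * s + s by ring] at hc
      omega)
    omega

end CliqueBiasTriangle

open CliqueBiasTriangle

/-- In the `(1:K_m)`-biased triangle game on `K_n` (Maker moving first),
if `m ≥ 4√n` then Breaker has a winning strategy. -/
theorem clique_bias_triangle_breaker (n m : ℕ)
    (h : 4 * Real.sqrt (n : ℝ) ≤ (m : ℝ)) :
    BreakerWinsMF (n := n) (CliqueBias m) TriangleWin := by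
  rcases Nat.eq_zero_or_pos n with rfl | hn
  · exact ⟨cliqueStrategy 1 m, legalBreaker_cliqueStrategy 1 m, fun _ _ ⟨u, _⟩ => u.elim0⟩
  obtain ⟨q, hq, hm⟩ := exists_pos_two_mul_div_add_two_mul_le hn h
  exact breakerWinsMF_of_invariant (legalBreaker_cliqueStrategy q m) (Safe q) (safe_empty q)
    (fun _ hp => hp.not_triangleWin) (fun _ e hp => hp.not_triangleWin_makerMove e)
    (fun _ e hp => hp.cliqueStrategy_step hq hm e)
end

section
/- For every n ≥ 10, Maker (with Breaker moving first) has a winning strategy in the (1:E_b)-biased triangle game on K_n even when b = ⌊n/2⌋, i.e., even when on each of his turns Breaker may claim an arbitrary matching of previously unclaimed edges. -/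
open Finset

/-!
Maker first claims any free edge `uv`. Breaker's graph is then the union of two matchings, so it
has maximum degree 2 and contains no triangle; a case analysis on the neighbourhoods of `u` and
`v` yields `z` such that after Maker claims `vz` and Breaker adds one more matching, either `uz`
is still free and Maker closes the triangle, or at most 6 vertices outside `{u, v, z}` are
Breaker-adjacent to `u`, `v` or `z`. Since `n ≥ 10`, some vertex `x` is not, and Maker claims
`vx`: one matching cannot block both `ux` and `zx`, as they share `x`.
-/

section Matchings

variable {V : Type*} [DecidableEq V]

def IsMatching (S : Finset (Sym2 V)) : Prop :=
  ∀ e ∈ S, ∀ f ∈ S, e ≠ f → ∀ v : V, v ∈ e → v ∉ f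

theorem IsMatching.eq_of_mem {S : Finset (Sym2 V)} (hS : IsMatching S) {a x y : V}
    (hx : s(a, x) ∈ S) (hy : s(a, y) ∈ S) : x = y := by
  by_contra hxy
  exact hS _ hx _ hy (fun h => hxy (Sym2.congr_right.1 h)) a (by simp) (by simp)

theorem IsMatching.not_triangle_in_union {B₁ B₂ : Finset (Sym2 V)} (h₁ : IsMatching B₁)
    (h₂ : IsMatching B₂) {a b c : V} (hab : a ≠ b) (hbc : b ≠ c) (hac : a ≠ c) :
    ¬ (s(a, b) ∈ B₁ ∪ B₂ ∧ s(b, c) ∈ B₁ ∪ B₂ ∧ s(a, c) ∈ B₁ ∪ B₂) := by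
  -- two of the three edges lie in the same matching, and any two of them share a vertex
  have hS : ∀ S, IsMatching S →
      (s(a, b) ∈ S → s(a, c) ∈ S → False) ∧ (s(a, b) ∈ S → s(b, c) ∈ S → False) ∧
        (s(a, c) ∈ S → s(b, c) ∈ S → False) := by
    intro S hS
    refine ⟨fun h h' => hbc (hS.eq_of_mem h h'), fun h h' => hac ?_, fun h h' => hab ?_⟩
    · exact hS.eq_of_mem (a := b) (by rwa [Sym2.eq_swap]) h'
    · exact hS.eq_of_mem (a := c) (by rwa [Sym2.eq_swap]) (by rwa [Sym2.eq_swap])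
  have := hS B₁ h₁
  have := hS B₂ h₂
  simp only [mem_union]
  tauto

variable [Fintype V]

def nbrs (B : Finset (Sym2 V)) (a : V) : Finset V :=
  univ.filter fun x => s(a, x) ∈ B

def vertexBoundary (B : Finset (Sym2 V)) (T : Finset V) : Finset V :=
  T.biUnion (nbrs B) \ T

@[simp]
theorem mem_nbrs {B : Finset (Sym2 V)} {a x : V} : x ∈ nbrs B a ↔ s(a, x) ∈ B := by
  simp [nbrs]

theorem mem_vertexBoundary {B : Finset (Sym2 V)} {T : Finset V} {x : V} :
    x ∈ vertexBoundary B T ↔ (∃ a ∈ T, s(a, x) ∈ B) ∧ x ∉ T := by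
  simp [vertexBoundary]

theorem nbrs_union (B C : Finset (Sym2 V)) (a : V) : nbrs (B ∪ C) a = nbrs B a ∪ nbrs C a := by
  ext x; simp

theorem vertexBoundary_union (B C : Finset (Sym2 V)) (T : Finset V) :
    vertexBoundary (B ∪ C) T = vertexBoundary B T ∪ vertexBoundary C T := by
  ext x
  simp only [mem_union, mem_vertexBoundary]
  grind

theorem card_vertexBoundary_le_sum (B : Finset (Sym2 V)) (T : Finset V) :
    #(vertexBoundary B T) ≤ ∑ a ∈ T, #(nbrs B a) :=
  (card_le_card sdiff_subset).trans card_biUnion_le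

theorem vertexBoundary_triple_subset (B : Finset (Sym2 V)) (u v w : V) :
    vertexBoundary B {u, v, w} ⊆ nbrs B u ∪ nbrs B v ∪ nbrs B w := by
  intro x hx
  obtain ⟨⟨a, ha, hax⟩, -⟩ := mem_vertexBoundary.1 hx
  simp only [mem_insert, mem_singleton] at ha
  rcases ha with rfl | rfl | rfl <;> simp [hax]

theorem exists_fresh_vertex {B : Finset (Sym2 V)} {T : Finset V}
    (h : #T + #(vertexBoundary B T) < Fintype.card V) :
    ∃ x ∉ T, ∀ a ∈ T, s(a, x) ∉ B := by
  obtain ⟨x, -, hx⟩ := exists_mem_notMem_of_card_lt_card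
    ((card_union_le T (vertexBoundary B T)).trans_lt h)
  rw [mem_union, not_or, mem_vertexBoundary] at hx
  exact ⟨x, hx.1, fun a ha hax => hx.2 ⟨⟨a, ha, hax⟩, hx.1⟩⟩

theorem IsMatching.card_nbrs_le_one {S : Finset (Sym2 V)} (hS : IsMatching S) (a : V) :
    #(nbrs S a) ≤ 1 :=
  card_le_one.2 fun _ hx _ hy => hS.eq_of_mem (mem_nbrs.1 hx) (mem_nbrs.1 hy)

theorem IsMatching.card_vertexBoundary_le {S : Finset (Sym2 V)} (hS : IsMatching S)
    (T : Finset V) : #(vertexBoundary S T) ≤ #T :=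
  (card_vertexBoundary_le_sum S T).trans <| by
    simpa using sum_le_sum fun a _ => hS.card_nbrs_le_one a

theorem IsMatching.vertexBoundary_subset_nbrs {S : Finset (Sym2 V)} (hS : IsMatching S)
    {u v z : V} (huz : s(u, z) ∈ S) : vertexBoundary S {u, v, z} ⊆ nbrs S v := by
  intro x hx
  obtain ⟨⟨a, ha, hax⟩, hxT⟩ := mem_vertexBoundary.1 hx
  simp only [mem_insert, mem_singleton, not_or] at ha hxT
  rcases ha with rfl | rfl | rfl
  · exact absurd (hS.eq_of_mem hax huz) hxT.2.2
  · exact mem_nbrs.2 hax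
  · exact absurd (hS.eq_of_mem hax (by rwa [Sym2.eq_swap])) hxT.1

theorem IsMatching.card_nbrs_union_le_two {B₁ B₂ : Finset (Sym2 V)} (h₁ : IsMatching B₁)
    (h₂ : IsMatching B₂) (a : V) : #(nbrs (B₁ ∪ B₂) a) ≤ 2 := by
  rw [nbrs_union]
  exact (card_union_le _ _).trans (add_le_add (h₁.card_nbrs_le_one a) (h₂.card_nbrs_le_one a))

end Matchings

section RobustCherry

variable {V : Type*} [DecidableEq V] [Fintype V]

-- `6 = 10 - 4`: some vertex outside `{u, v, z}` then has no Breaker edge to the cherry.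
def RobustCherry (B : Finset (Sym2 V)) (u v z : V) : Prop :=
  ∀ S, IsMatching S → s(u, z) ∈ B ∪ S → #(vertexBoundary (B ∪ S) {u, v, z}) ≤ 6

theorem robustCherry_of_card_le_three {B : Finset (Sym2 V)} {u v z : V}
    (h : #(vertexBoundary B {u, v, z}) ≤ 3) : RobustCherry B u v z := by
  intro S hS _
  rw [vertexBoundary_union]
  have := (hS.card_vertexBoundary_le {u, v, z}).trans card_le_three
  have := card_union_le (vertexBoundary B {u, v, z}) (vertexBoundary S {u, v, z})
  omega

-- Since `uz ∉ B`, Breaker's reply `S` contains `uz`, so its edges at `u` and `z` stay inside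
-- `{u, v, z}`.
theorem robustCherry_of_not_mem {B : Finset (Sym2 V)} {u v z : V} (huz : s(u, z) ∉ B)
    (h : #(nbrs B u ∪ nbrs B v ∪ nbrs B z) ≤ 5) : RobustCherry B u v z := by
  intro S hS huzS
  have huzS : s(u, z) ∈ S := (mem_union.1 huzS).resolve_left huz
  rw [vertexBoundary_union]
  have := (card_le_card (vertexBoundary_triple_subset B u v z)).trans h
  have := (card_le_card (hS.vertexBoundary_subset_nbrs (v := v) huzS)).trans
    (hS.card_nbrs_le_one v)
  have := card_union_le (vertexBoundary B {u, v, z}) (vertexBoundary S {u, v, z})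
  omega

theorem exists_robustCherry_of_card_nbrs_union_le {B : Finset (Sym2 V)}
    (hV : 6 < Fintype.card V) (hdeg : ∀ a, #(nbrs B a) ≤ 2) {u v : V} (huv : u ≠ v)
    (hsmall : #(nbrs B u ∪ nbrs B v) ≤ 3) :
    ∃ z, z ≠ u ∧ z ≠ v ∧ s(v, z) ∉ B ∧ RobustCherry B u v z := by
  obtain ⟨w, hw, hwB⟩ := exists_fresh_vertex (B := B) (T := {u, v}) <| by
    have := (card_vertexBoundary_le_sum B {u, v}).trans_eq (sum_pair huv)
    have := card_le_two (a := u) (b := v)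
    have := hdeg u; have := hdeg v
    omega
  simp only [mem_insert, mem_singleton, not_or, forall_eq_or_imp, forall_eq] at hw hwB
  refine ⟨w, hw.1, hw.2, hwB.2, robustCherry_of_not_mem hwB.1 ?_⟩
  exact (card_union_le _ _).trans (by have := hdeg w; omega)

theorem exists_robustCherry_of_nbrs_eq_pair {B₁ B₂ : Finset (Sym2 V)} (h₁ : IsMatching B₁)
    (h₂ : IsMatching B₂) (hloop : ∀ a, s(a, a) ∉ B₁ ∪ B₂) {u v a b : V}
    (huvB : s(u, v) ∉ B₁ ∪ B₂) (hab : a ≠ b) (hNu : nbrs (B₁ ∪ B₂) u = {a, b})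
    (hva : s(v, a) ∉ B₁ ∪ B₂) :
    ∃ z, z ≠ u ∧ z ≠ v ∧ s(v, z) ∉ B₁ ∪ B₂ ∧ RobustCherry (B₁ ∪ B₂) u v z := by
  set G := B₁ ∪ B₂
  have hdeg : ∀ c, #(nbrs G c) ≤ 2 := h₁.card_nbrs_union_le_two h₂
  have hua : s(u, a) ∈ G := mem_nbrs.1 (by simp [hNu])
  have hub : s(u, b) ∈ G := mem_nbrs.1 (by simp [hNu])
  have hau : a ≠ u := by rintro rfl; exact hloop a hua
  by_cases hclosed : ∀ y, s(a, y) ∈ G → y = u ∨ s(v, y) ∈ G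
  · refine ⟨a, hau, by rintro rfl; exact huvB hua, hva, robustCherry_of_card_le_three ?_⟩
    have hsub : vertexBoundary G {u, v, a} ⊆ insert b (nbrs G v) := by
      intro x hx
      obtain ⟨⟨c, hc, hcx⟩, hxT⟩ := mem_vertexBoundary.1 hx
      simp only [mem_insert, mem_singleton, not_or] at hc hxT
      rcases hc with rfl | rfl | rfl
      · have : x ∈ nbrs G c := mem_nbrs.2 hcx
        simp only [hNu, mem_insert, mem_singleton] at this
        exact this.elim (fun hxa => absurd hxa hxT.2.2) (fun hxb => hxb ▸ mem_insert_self _ _)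
      · exact mem_insert_of_mem (mem_nbrs.2 hcx)
      · exact mem_insert_of_mem (mem_nbrs.2 ((hclosed x hcx).resolve_left hxT.1))
    exact (card_le_card hsub).trans ((card_insert_le _ _).trans (by have := hdeg v; omega))
  -- Otherwise some `y` with `s(v, y) ∉ G` shares the neighbour `a` with `u`.
  push Not at hclosed
  obtain ⟨y, hay, hyu, hvy⟩ := hclosed
  have huy : s(u, y) ∉ G := fun h => by
    have : y ∈ nbrs G u := mem_nbrs.2 h
    simp only [hNu, mem_insert, mem_singleton] at this
    rcases this with rfl | rfl
    · exact hloop y hay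
    · exact h₁.not_triangle_in_union h₂ (Ne.symm hau) hab (by rintro rfl; exact hloop u hub)
        ⟨hua, hay, h⟩
  refine ⟨y, hyu, by rintro rfl; exact hva (by rwa [Sym2.eq_swap]), hvy,
    robustCherry_of_not_mem huy ?_⟩
  have hUy : #(nbrs G u ∪ nbrs G y) ≤ 3 := by
    have := card_union_add_card_inter (nbrs G u) (nbrs G y)
    have := card_pos.2 ⟨a, mem_inter.2 ⟨show a ∈ nbrs G u by simp [hNu],
      mem_nbrs.2 (by rwa [Sym2.eq_swap])⟩⟩
    have := hdeg u; have := hdeg y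
    omega
  rw [union_right_comm]
  exact (card_union_le _ _).trans (by have := hdeg v; omega)

theorem exists_robustCherry (hV : 6 < Fintype.card V) {B₁ B₂ : Finset (Sym2 V)}
    (h₁ : IsMatching B₁) (h₂ : IsMatching B₂) (hloop : ∀ a, s(a, a) ∉ B₁ ∪ B₂) {u v : V}
    (huv : u ≠ v) (huvB : s(u, v) ∉ B₁ ∪ B₂) :
    ∃ z, z ≠ u ∧ z ≠ v ∧ s(v, z) ∉ B₁ ∪ B₂ ∧ RobustCherry (B₁ ∪ B₂) u v z := by
  have hdeg := h₁.card_nbrs_union_le_two h₂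
  by_cases hsmall : #(nbrs (B₁ ∪ B₂) u ∪ nbrs (B₁ ∪ B₂) v) ≤ 3
  · exact exists_robustCherry_of_card_nbrs_union_le hV hdeg huv hsmall
  -- Otherwise `u` and `v` have two neighbours each, all four distinct.
  have := card_union_add_card_inter (nbrs (B₁ ∪ B₂) u) (nbrs (B₁ ∪ B₂) v)
  have := hdeg u; have := hdeg v
  obtain ⟨a, b, hab, hNu⟩ := card_eq_two.1 (show #(nbrs (B₁ ∪ B₂) u) = 2 by omega)
  refine exists_robustCherry_of_nbrs_eq_pair h₁ h₂ hloop huvB hab hNu fun hva => ?_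
  have := card_pos.2 ⟨a, mem_inter.2 ⟨show a ∈ nbrs (B₁ ∪ B₂) u by simp [hNu], mem_nbrs.2 hva⟩⟩
  omega

end RobustCherry

section Game

variable {n : ℕ}

theorem mk_mem_board {a b : Fin n} : s(a, b) ∈ board n ↔ a ≠ b := by
  simp [board]

def IsFree (p : MBPos n) (e : Sym2 (Fin n)) : Prop :=
  e ∈ board n ∧ e ∉ p.M ∧ e ∉ p.B

def IsLegalMatchingMove (p : MBPos n) (S : Finset (Sym2 (Fin n))) : Prop :=
  S ⊆ board n ∧ (∀ e ∈ S, e ∉ p.M ∧ e ∉ p.B) ∧ IsMatching S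

theorem makerMove_of_isFree {p : MBPos n} {e : Sym2 (Fin n)} (h : IsFree p e) :
    makerMove p e = ⟨insert e p.M, p.B⟩ :=
  if_pos h

theorem playBF_two_mul_add_one (ms : MBPos n → Sym2 (Fin n))
    (bs : MBPos n → Finset (Sym2 (Fin n))) (k : ℕ) :
    playBF ms bs (2 * k + 1) = breakerMove (playBF ms bs (2 * k)) (bs (playBF ms bs (2 * k))) := by
  simp [playBF]

theorem playBF_two_mul_add_two (ms : MBPos n → Sym2 (Fin n))
    (bs : MBPos n → Finset (Sym2 (Fin n))) (k : ℕ) :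
    playBF ms bs (2 * k + 2) =
      makerMove (playBF ms bs (2 * k + 1)) (ms (playBF ms bs (2 * k + 1))) := by
  simp [playBF, Nat.add_mod]

def MakerWinsOrForces (ms : MBPos n → Sym2 (Fin n)) (win : Finset (Sym2 (Fin n)) → Prop)
    (J : MBPos n → Prop) (q : MBPos n) : Prop :=
  win (makerMove q (ms q)).M ∨
    ∀ S, IsLegalMatchingMove (makerMove q (ms q)) S → J (breakerMove (makerMove q (ms q)) S)

theorem exists_win_or_of_makerWinsOrForces {b : ℕ} {ms : MBPos n → Sym2 (Fin n)}
    {bs : MBPos n → Finset (Sym2 (Fin n))} (hbs : LegalBreaker (MatchingBias b) bs)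
    {win : Finset (Sym2 (Fin n)) → Prop} {I J : MBPos n → Prop}
    (hIJ : ∀ q, I q → MakerWinsOrForces ms win J q) (k : ℕ) (hI : I (playBF ms bs (2 * k + 1))) :
    (∃ t, win (playBF ms bs t).M) ∨ J (playBF ms bs (2 * (k + 1) + 1)) := by
  rw [playBF_two_mul_add_one, show 2 * (k + 1) = 2 * k + 2 by ring, playBF_two_mul_add_two]
  rcases hIJ _ hI with hwin | hJ
  · exact .inl ⟨2 * k + 2, by rwa [playBF_two_mul_add_two]⟩
  · obtain ⟨hboard, hfree, -, hmatch⟩ := hbs (makerMove _ _)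
    exact .inr (hJ _ ⟨hboard, hfree, hmatch⟩)

end Game

section TriangleStrategy

variable {n : ℕ}

def HasWinningEdge (p : MBPos n) : Prop :=
  ∃ e, IsFree p e ∧ TriangleWin (insert e p.M)

theorem hasWinningEdge_of_cherry {p : MBPos n} {a v c : Fin n} (hav : a ≠ v) (hac : a ≠ c)
    (hvc : v ≠ c) (h₁ : s(a, v) ∈ p.M) (h₂ : s(v, c) ∈ p.M) (hM : s(a, c) ∉ p.M)
    (hB : s(a, c) ∉ p.B) : HasWinningEdge p :=
  ⟨s(a, c), ⟨mk_mem_board.2 hac, hM, hB⟩, a, v, c, hav, hac, hvc,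
    mem_insert_of_mem h₁, mem_insert_self _ _, mem_insert_of_mem h₂⟩

def StageMove : ℕ → MBPos n → Sym2 (Fin n) → Prop
  | 0, _, _ => True
  | 1, p, e => ∃ u v z, p.M = {s(u, v)} ∧ e = s(v, z) ∧ u ≠ v ∧ z ≠ u ∧ z ≠ v ∧
      RobustCherry p.B u v z
  | 2, p, e => ∃ u v z x, p.M = {s(v, z), s(u, v)} ∧ e = s(v, x) ∧ u ≠ v ∧ u ≠ z ∧ v ≠ z ∧
      x ≠ u ∧ x ≠ v ∧ x ≠ z ∧ s(u, x) ∉ p.B ∧ s(z, x) ∉ p.B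
  | _ + 3, _, _ => False

-- The fallback `e₀` is never played: in the positions reached, one of the first two branches
-- applies.
open Classical in
noncomputable def triangleStrategy (e₀ : Sym2 (Fin n)) (p : MBPos n) : Sym2 (Fin n) :=
  if h : HasWinningEdge p then h.choose
  else if h : ∃ e, IsFree p e ∧ StageMove p.M.card p e then h.choose
  else e₀

theorem triangleStrategy_wins (e₀ : Sym2 (Fin n)) {p : MBPos n} (h : HasWinningEdge p) :
    TriangleWin (makerMove p (triangleStrategy e₀ p)).M := by
  have hspec := h.choose_spec
  rw [triangleStrategy, dif_pos h, makerMove_of_isFree hspec.1]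
  exact hspec.2

theorem HasWinningEdge.makerWinsOrForces (e₀ : Sym2 (Fin n)) {q : MBPos n}
    (h : HasWinningEdge q) (J : MBPos n → Prop) :
    MakerWinsOrForces (triangleStrategy e₀) TriangleWin J q :=
  .inl (triangleStrategy_wins e₀ h)

theorem makerWinsOrForces_of_stageMove (e₀ : Sym2 (Fin n)) {q : MBPos n} {J : MBPos n → Prop}
    (hex : ∃ e, IsFree q e ∧ StageMove q.M.card q e)
    (hJ : ∀ e, IsFree q e → StageMove q.M.card q e → ∀ S,
      IsLegalMatchingMove ⟨insert e q.M, q.B⟩ S → J ⟨insert e q.M, q.B ∪ S⟩) :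
    MakerWinsOrForces (triangleStrategy e₀) TriangleWin J q := by
  by_cases hwin : HasWinningEdge q
  · exact hwin.makerWinsOrForces e₀ J
  have hspec := hex.choose_spec
  have hms : triangleStrategy e₀ q = hex.choose := by
    rw [triangleStrategy, dif_neg hwin, dif_pos hex]
  right
  rw [hms, makerMove_of_isFree hspec.1]
  exact hJ _ hspec.1 hspec.2

end TriangleStrategy

section Stages

variable {n : ℕ}

def IsOpening (q : MBPos n) : Prop :=
  q.M = ∅ ∧ q.B ⊆ board n ∧ IsMatching q.B

def IsEdgeStage (q : MBPos n) : Prop :=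
  ∃ u v, q.M = {s(u, v)} ∧ u ≠ v ∧ s(u, v) ∉ q.B ∧ q.B ⊆ board n ∧
    ∃ B₁ B₂, IsMatching B₁ ∧ IsMatching B₂ ∧ q.B = B₁ ∪ B₂

def IsCherryStage (q : MBPos n) : Prop :=
  ∃ u v z, q.M = {s(v, z), s(u, v)} ∧ u ≠ v ∧ u ≠ z ∧ v ≠ z ∧
    (s(u, z) ∈ q.B → #(vertexBoundary q.B {u, v, z}) ≤ 6)

theorem isOpening_playBF_one {b : ℕ} {ms : MBPos n → Sym2 (Fin n)}
    {bs : MBPos n → Finset (Sym2 (Fin n))} (hbs : LegalBreaker (MatchingBias b) bs) :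
    IsOpening (playBF ms bs 1) := by
  obtain ⟨hboard, -, -, hmatch⟩ := hbs ⟨∅, ∅⟩
  have hB : (playBF ms bs 1).B = bs ⟨∅, ∅⟩ := empty_union _
  exact ⟨rfl, hB ▸ hboard, hB ▸ hmatch⟩

theorem IsOpening.makerWinsOrForces (e₀ : Sym2 (Fin n)) (hn : 3 ≤ n) {q : MBPos n}
    (hq : IsOpening q) : MakerWinsOrForces (triangleStrategy e₀) TriangleWin IsEdgeStage q := by
  obtain ⟨hM, hBboard, hBmatch⟩ := hq
  apply makerWinsOrForces_of_stageMove
  · have ha : 0 < n := by omega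
    obtain ⟨x, hx, hax⟩ := exists_fresh_vertex (B := q.B) (T := {⟨0, ha⟩}) <| by
      have := hBmatch.card_vertexBoundary_le {⟨0, ha⟩}
      simp only [card_singleton, Fintype.card_fin] at this ⊢
      omega
    simp only [mem_singleton, forall_eq] at hx hax
    exact ⟨s(⟨0, ha⟩, x), ⟨mk_mem_board.2 (Ne.symm hx), by simp [hM], hax⟩, by simp [hM, StageMove]⟩
  · rintro e ⟨he, -, heB⟩ - S ⟨hSboard, hSfree, hSmatch⟩
    induction e using Sym2.ind with | _ u v => ?_
    refine ⟨u, v, by simp [hM], mk_mem_board.1 he, ?_, union_subset hBboard hSboard,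
      q.B, S, hBmatch, hSmatch, rfl⟩
    exact notMem_union.2 ⟨heB, fun h => (hSfree _ h).1 (mem_insert_self _ _)⟩

theorem IsEdgeStage.makerWinsOrForces (e₀ : Sym2 (Fin n)) (hn : 7 ≤ n) {q : MBPos n}
    (hq : IsEdgeStage q) :
    MakerWinsOrForces (triangleStrategy e₀) TriangleWin IsCherryStage q := by
  obtain ⟨u, v, hM, huv, huvB, hBboard, B₁, B₂, h₁, h₂, hB⟩ := hq
  have hcard : q.M.card = 1 := by rw [hM, card_singleton]
  apply makerWinsOrForces_of_stageMove
  · have hloop : ∀ a, s(a, a) ∉ B₁ ∪ B₂ := fun a h =>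
      mk_mem_board.1 (hBboard (hB ▸ h)) rfl
    obtain ⟨z, hzu, hzv, hvz, hrob⟩ :=
      exists_robustCherry (by simp only [Fintype.card_fin]; omega) h₁ h₂ hloop huv (hB ▸ huvB)
    refine ⟨s(v, z), ⟨mk_mem_board.2 (Ne.symm hzv), ?_, hB ▸ hvz⟩, ?_⟩
    · simp [hM, hzu, huv.symm]
    · rw [hcard]
      exact ⟨u, v, z, hM, rfl, huv, hzu, hzv, hB ▸ hrob⟩
  · rintro e - hstage S ⟨-, -, hSmatch⟩
    rw [hcard] at hstage
    obtain ⟨u', v', z', hM', rfl, huv', hzu', hzv', hrob⟩ := hstage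
    exact ⟨u', v', z', by rw [hM'], huv', hzu'.symm, hzv'.symm, hrob S hSmatch⟩

theorem hasWinningEdge_of_doubleThreat {q : MBPos n} {S : Finset (Sym2 (Fin n))}
    (hS : IsMatching S) {u v z x : Fin n} (hM : q.M = {s(v, z), s(u, v)}) (huv : u ≠ v)
    (huz : u ≠ z) (hvz : v ≠ z) (hxu : x ≠ u) (hxv : x ≠ v) (hxz : x ≠ z)
    (hux : s(u, x) ∉ q.B) (hzx : s(z, x) ∉ q.B) :
    HasWinningEdge ⟨insert s(v, x) q.M, q.B ∪ S⟩ := by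
  have hSx : s(u, x) ∉ S ∨ s(z, x) ∉ S := by
    by_contra! h
    exact huz (hS.eq_of_mem (a := x) (by rw [Sym2.eq_swap]; exact h.1)
      (by rw [Sym2.eq_swap]; exact h.2))
  rcases hSx with huxS | hzxS
  · exact hasWinningEdge_of_cherry huv (Ne.symm hxu) (Ne.symm hxv) (by simp [hM])
      (mem_insert_self _ _) (by simp [hM, huv, hxv, hxz, hxu, huz])
      (notMem_union.2 ⟨hux, huxS⟩)
  · exact hasWinningEdge_of_cherry (a := z) (Ne.symm hvz) (Ne.symm hxz) (Ne.symm hxv)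
      (by simp [hM, Sym2.eq_swap]) (mem_insert_self _ _) (by simp [hM, hxv, hxz, hxu, hvz.symm])
      (notMem_union.2 ⟨hzx, hzxS⟩)

theorem IsCherryStage.makerWinsOrForces (e₀ : Sym2 (Fin n)) (hn : 10 ≤ n) {q : MBPos n}
    (hq : IsCherryStage q) :
    MakerWinsOrForces (triangleStrategy e₀) TriangleWin HasWinningEdge q := by
  obtain ⟨u, v, z, hM, huv, huz, hvz, hbound⟩ := hq
  by_cases huzB : s(u, z) ∉ q.B
  · refine HasWinningEdge.makerWinsOrForces e₀ ?_ _
    exact hasWinningEdge_of_cherry huv huz hvz (by simp [hM]) (by simp [hM])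
      (by simp [hM, huz, huv, hvz.symm]) huzB
  have hcard : q.M.card = 2 := by
    rw [hM, card_pair (by simp [huv.symm, huz.symm])]
  apply makerWinsOrForces_of_stageMove
  · obtain ⟨x, hx, hxB⟩ := exists_fresh_vertex (B := q.B) (T := {u, v, z}) <| by
      have := hbound (not_not.1 huzB)
      have := card_le_three (a := u) (b := v) (c := z)
      simp only [Fintype.card_fin]
      omega
    simp only [mem_insert, mem_singleton, not_or, forall_eq_or_imp, forall_eq] at hx hxB
    obtain ⟨hxu, hxv, hxz⟩ := hx
    refine ⟨s(v, x), ⟨mk_mem_board.2 (Ne.symm hxv), ?_, hxB.2.1⟩, ?_⟩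
    · simp [hM, hxz, hxu, hxv, hvz, huv.symm]
    · rw [hcard]
      exact ⟨u, v, z, x, hM, rfl, huv, huz, hvz, hxu, hxv, hxz, hxB.1, hxB.2.2⟩
  · rintro e - hstage S ⟨-, -, hSmatch⟩
    rw [hcard] at hstage
    obtain ⟨u, v, z, x, hM, rfl, huv, huz, hvz, hxu, hxv, hxz, hux, hzx⟩ := hstage
    exact hasWinningEdge_of_doubleThreat hSmatch hM huv huz hvz hxu hxv hxz hux hzx

end Stages

theorem makerWinsBF_triangleWin_matchingBias {n : ℕ} (b : ℕ) (hn : 10 ≤ n) :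
    MakerWinsBF (n := n) (MatchingBias b) TriangleWin := by
  have h0 : 0 < n := by omega
  refine ⟨triangleStrategy s(⟨0, h0⟩, ⟨0, h0⟩), fun bs hbs => ?_⟩
  obtain hwin | hedge := exists_win_or_of_makerWinsOrForces hbs
    (fun _ => IsOpening.makerWinsOrForces _ (by omega)) 0 (isOpening_playBF_one hbs)
  · exact hwin
  obtain hwin | hcherry := exists_win_or_of_makerWinsOrForces hbs
    (fun _ => IsEdgeStage.makerWinsOrForces _ (by omega)) 1 hedge
  · exact hwin
  obtain hwin | hthreat := exists_win_or_of_makerWinsOrForces hbs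
    (fun _ => IsCherryStage.makerWinsOrForces _ hn) 2 hcherry
  · exact hwin
  exact ⟨2 * 3 + 2, by rw [playBF_two_mul_add_two]; exact triangleStrategy_wins _ hthreat⟩

/-- for every `n ≥ 10`, Maker (Breaker moving first) wins the
`(1:E_b)`-biased triangle game on `K_n` even with the maximal matching bias
`b = ⌊n/2⌋`. -/
theorem matching_bias_triangle_maker (n : ℕ) (h : 10 ≤ n) :
    MakerWinsBF (n := n) (MatchingBias (n / 2)) TriangleWin :=
  makerWinsBF_triangleWin_matchingBias (n / 2) h
end

section
/- In the (1:E_b)-biased connectivity game on K_n with b = ⌊n/2⌋ (so on each of his turns Breaker may claim an arbitrary matching of previously unclaimed edges), if Maker makes the first move then Maker has a winning strategy; that is, Breaker cannot win even with a maximal matching bias when Maker moves first. -/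
open Finset

section AuxConn

open scoped Classical

variable {n : ℕ}

/-- The set of vertices reachable from vertex `0` in Maker's graph. -/
noncomputable def RS (hn : 0 < n) (M : Finset (Sym2 (Fin n))) : Finset (Fin n) :=
  Finset.univ.filter
    (fun v => (SimpleGraph.fromEdgeSet (M : Set (Sym2 (Fin n)))).Reachable ⟨0, hn⟩ v)

lemma mem_RS (hn : 0 < n) {M : Finset (Sym2 (Fin n))} {v : Fin n} :
    v ∈ RS hn M ↔ (SimpleGraph.fromEdgeSet (M : Set (Sym2 (Fin n)))).Reachable ⟨0, hn⟩ v := by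
  unfold RS
  rw [Finset.mem_filter]
  simp

lemma RS_mono (hn : 0 < n) {M M' : Finset (Sym2 (Fin n))} (hMM : M ⊆ M') :
    RS hn M ⊆ RS hn M' := by
  intro v hv
  rw [mem_RS] at hv ⊢
  exact hv.mono (SimpleGraph.fromEdgeSet_mono (by exact_mod_cast hMM))

lemma zero_mem_RS (hn : 0 < n) (M : Finset (Sym2 (Fin n))) : (⟨0, hn⟩ : Fin n) ∈ RS hn M := by
  rw [mem_RS]

/-- A "good" edge at position `p`: an unclaimed board edge with exactly one
endpoint in the component of `0` in Maker's graph. -/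
def Pgood (hn : 0 < n) (p : MBPos n) (e : Sym2 (Fin n)) : Prop :=
  e ∈ board n ∧ e ∉ p.M ∧ e ∉ p.B ∧
    ∃ u v : Fin n, e = s(u, v) ∧ u ∈ RS hn p.M ∧ v ∉ RS hn p.M

/-- Maker's strategy: claim a good edge if one exists. -/
noncomputable def msC (hn : 0 < n) (p : MBPos n) : Sym2 (Fin n) :=
  if h : ∃ e, Pgood hn p e then h.choose else s((⟨0, hn⟩ : Fin n), (⟨0, hn⟩ : Fin n))

lemma degIn_union_le (B S : Finset (Sym2 (Fin n))) (v : Fin n) :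
    degIn (B ∪ S) v ≤ degIn B v + degIn S v := by
  unfold degIn
  rw [Finset.filter_union]
  exact Finset.card_union_le _ _

lemma degIn_matching_le_one {S : Finset (Sym2 (Fin n))}
    (hS : ∀ e ∈ S, ∀ f ∈ S, e ≠ f → ∀ v : Fin n, v ∈ e → v ∉ f) (v : Fin n) :
    degIn S v ≤ 1 := by
  unfold degIn
  refine Finset.card_le_one.mpr ?_
  intro a ha b hb
  rw [Finset.mem_filter] at ha hb
  by_contra hne
  exact hS a ha.1 b hb.1 hne v ha.2 hb.2

lemma exists_good (hn : 0 < n) (p : MBPos n) (t : ℕ)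
    (hcard : t + 1 ≤ (RS hn p.M).card)
    (hne : RS hn p.M ≠ Finset.univ)
    (hB : ∀ v, degIn p.B v ≤ t) :
    ∃ e, Pgood hn p e := by
  obtain ⟨v, hv⟩ : ∃ v, v ∉ RS hn p.M := by
    by_contra hcon
    push_neg at hcon
    exact hne (Finset.eq_univ_iff_forall.mpr hcon)
  have hex : ∃ u ∈ RS hn p.M, s(u, v) ∉ p.B := by
    by_contra hcon
    push_neg at hcon
    have himg : (RS hn p.M).image (fun u => s(u, v)) ⊆ p.B.filter (fun e => v ∈ e) := by
      intro e he
      rw [Finset.mem_image] at he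
      obtain ⟨u, hu, rfl⟩ := he
      rw [Finset.mem_filter]
      exact ⟨hcon u hu, by simp⟩
    have hinj : Set.InjOn (fun u => s(u, v)) ↑(RS hn p.M) := by
      intro a ha b hb hab
      simp only [Sym2.eq, Sym2.rel_iff', Prod.mk.injEq, Prod.swap_prod_mk] at hab
      rcases hab with ⟨h1, _⟩ | ⟨h1, h2⟩
      · exact h1
      · exact absurd (h1 ▸ ha) (by exact_mod_cast hv)
    have h1 : (RS hn p.M).card = ((RS hn p.M).image (fun u => s(u, v))).card :=
      (Finset.card_image_of_injOn hinj).symm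
    have h2 : ((RS hn p.M).image (fun u => s(u, v))).card ≤ degIn p.B v :=
      Finset.card_le_card himg
    have := hB v
    omega
  obtain ⟨u, hu, huB⟩ := hex
  have huv : u ≠ v := fun hh => hv (hh ▸ hu)
  refine ⟨s(u, v), ?_, ?_, huB, u, v, rfl, hu, hv⟩
  · unfold board
    rw [Finset.mem_filter]
    exact ⟨Finset.mem_univ _, by simp [Sym2.mk_isDiag_iff, huv]⟩
  · intro hM
    apply hv
    rw [mem_RS] at hu ⊢
    exact hu.trans (SimpleGraph.Adj.reachable
      ((SimpleGraph.fromEdgeSet_adj _).mpr ⟨by exact_mod_cast hM, huv⟩))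

lemma card_RS_insert (hn : 0 < n) {M : Finset (Sym2 (Fin n))} {u v : Fin n}
    (hu : u ∈ RS hn M) (hv : v ∉ RS hn M) :
    (RS hn M).card + 1 ≤ (RS hn (insert s(u, v) M)).card := by
  have huv : u ≠ v := fun hh => hv (hh ▸ hu)
  have hsub : insert v (RS hn M) ⊆ RS hn (insert s(u, v) M) := by
    intro w hw
    rcases Finset.mem_insert.mp hw with rfl | hw
    · rw [mem_RS]
      have hu' : u ∈ RS hn (insert s(u, w) M) := RS_mono hn (Finset.subset_insert _ _) hu
      rw [mem_RS] at hu'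
      refine hu'.trans (SimpleGraph.Adj.reachable
        ((SimpleGraph.fromEdgeSet_adj _).mpr ⟨?_, huv⟩))
      simp
    · exact RS_mono hn (Finset.subset_insert _ _) hw
  calc (RS hn M).card + 1 = (insert v (RS hn M)).card := (Finset.card_insert_of_notMem hv).symm
    _ ≤ _ := Finset.card_le_card hsub

end AuxConn

/-- in the `(1:E_b)`-biased connectivity game on `K_n` with the maximal
matching bias `b = ⌊n/2⌋`, if Maker moves first then Maker has a winning strategy. -/
theorem matching_bias_connectivity_maker_first (n : ℕ) (h : 2 ≤ n) :
    MakerWinsMF (n := n) (MatchingBias (n / 2)) ConnWin := by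
  have hn : 0 < n := by omega
  refine ⟨msC hn, ?_⟩
  intro bs hbs
  refine ⟨2 * (n - 1), ?_⟩
  set pl := playMF (msC hn) bs with hpl
  have pl_maker : ∀ t : ℕ, pl (2 * t + 1) = makerMove (pl (2 * t)) (msC hn (pl (2 * t))) := by
    intro t
    have h2 : (2 * t) % 2 = 0 := by omega
    rw [hpl]
    show playMF _ _ (2 * t + 1) = _
    rw [playMF]
    simp [h2]
  have pl_breaker : ∀ t : ℕ, pl (2 * t + 2) = breakerMove (pl (2 * t + 1)) (bs (pl (2 * t + 1))) := by
    intro t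
    have h2 : (2 * t + 1) % 2 = 1 := by omega
    rw [hpl]
    show playMF _ _ (2 * t + 1 + 1) = _
    rw [playMF]
    simp [h2]
  have key : ∀ t : ℕ, min (t + 1) n ≤ (RS hn (pl (2 * t)).M).card ∧
      ∀ v, degIn (pl (2 * t)).B v ≤ t := by
    intro t
    induction t with
    | zero =>
      constructor
      · have : (⟨0, hn⟩ : Fin n) ∈ RS hn (pl 0).M := zero_mem_RS hn _
        have hc : 1 ≤ (RS hn (pl 0).M).card := Finset.card_pos.mpr ⟨_, this⟩
        exact le_trans (min_le_left _ _) hc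
      · intro v
        show degIn (∅ : Finset (Sym2 (Fin n))) v ≤ 0
        simp [degIn]
    | succ t ih =>
      obtain ⟨ihR, ihB⟩ := ih
      set q := pl (2 * t) with hq
      -- Maker's move
      have hM1 : min (t + 2) n ≤ (RS hn (pl (2 * t + 1)).M).card ∧
          (pl (2 * t + 1)).B = q.B := by
        rw [pl_maker t, ← hq]
        by_cases hfull : RS hn q.M = Finset.univ
        · constructor
          · have : (RS hn (makerMove q (msC hn q)).M).card ≥ (RS hn q.M).card := by
              apply Finset.card_le_card
              apply RS_mono
              unfold makerMove
              split
              · exact Finset.subset_insert _ _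
              · exact subset_rfl
            rw [hfull] at this
            simp only [Finset.card_univ, Fintype.card_fin] at this
            omega
          · unfold makerMove
            split <;> rfl
        · -- RS is not everything, so min (t+1) n = t+1 and a good edge exists
          have hcardlt : (RS hn q.M).card < n := by
            have hle : (RS hn q.M).card ≤ n := by
              have := Finset.card_le_card (Finset.subset_univ (RS hn q.M))
              simpa using this
            rcases lt_or_eq_of_le hle with h' | h'
            · exact h'
            · exfalso
              apply hfull
              apply Finset.eq_univ_of_card
              simp [h']
          have hmin : min (t + 1) n = t + 1 := by omega
          rw [hmin] at ihR
          obtain ⟨e, he⟩ := exists_good hn q t ihR hfull ihB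
          have hdit : ∃ e, Pgood hn q e := ⟨e, he⟩
          have hmsq : Pgood hn q (msC hn q) := by
            unfold msC
            rw [dif_pos hdit]
            exact hdit.choose_spec
          obtain ⟨hb, hMn, hBn, u, v, hev, hu, hv⟩ := hmsq
          have hmk : makerMove q (msC hn q) = ⟨insert (msC hn q) q.M, q.B⟩ := by
            unfold makerMove
            rw [if_pos ⟨hb, hMn, hBn⟩]
          rw [hmk]
          refine ⟨?_, rfl⟩
          show min (t + 2) n ≤ (RS hn (insert (msC hn q) q.M)).card
          have := card_RS_insert hn hu hv
          rw [← hev] at this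
          omega
      -- Breaker's move
      obtain ⟨hM1R, hM1B⟩ := hM1
      have h2 : 2 * (t + 1) = 2 * t + 2 := by ring
      rw [h2, pl_breaker t]
      have hBM : (breakerMove (pl (2 * t + 1)) (bs (pl (2 * t + 1)))).M = (pl (2 * t + 1)).M := rfl
      constructor
      · rw [hBM]
        exact hM1R
      · intro v
        show degIn ((pl (2 * t + 1)).B ∪ bs (pl (2 * t + 1))) v ≤ t + 1
        have hmatch := (hbs (pl (2 * t + 1))).2.2
        have h1 := degIn_union_le (pl (2 * t + 1)).B (bs (pl (2 * t + 1))) v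
        have h2 := degIn_matching_le_one hmatch.2 v
        have h3 : degIn (pl (2 * t + 1)).B v ≤ t := by
          rw [hM1B]
          exact ihB v
        omega
  -- Conclusion: at time 2*(n-1), RS is everything.
  obtain ⟨hR, -⟩ := key (n - 1)
  have hmin : min (n - 1 + 1) n = n := by omega
  rw [hmin] at hR
  have huniv : RS hn (pl (2 * (n - 1))).M = Finset.univ := by
    apply Finset.eq_univ_of_card
    have hle : (RS hn (pl (2 * (n - 1))).M).card ≤ n := by
      have := Finset.card_le_card (Finset.subset_univ (RS hn (pl (2 * (n - 1))).M))
      simpa using this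
    simp
    omega
  show ConnWin _
  unfold ConnWin
  rw [SimpleGraph.connected_iff]
  refine ⟨?_, ⟨⟨0, hn⟩⟩⟩
  · intro a b
    have ha : a ∈ RS hn (pl (2 * (n - 1))).M := huniv ▸ Finset.mem_univ a
    have hb : b ∈ RS hn (pl (2 * (n - 1))).M := huniv ▸ Finset.mem_univ b
    rw [mem_RS] at ha hb
    exact ha.symm.trans hb
end

section
/- Let k, c ≥ 2 be integers and let a_1, …, a_k be real numbers with average a = (a_1 + ⋯ + a_k)/k. Run the following process for k−1 turns on the multiset S, initialized to {a_1, …, a_k}: on each turn, choose an arbitrary element of S and add c to it, add 1 to every other element of S, and then delete from the resulting multiset an element of maximum value. After the (k−1)-th turn a single number a' remains. Then, for every possible sequence of choices, a' − a ≤ c + k − (c−1)/k − 2. -/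
/-- One turn of the add-and-delete process with parameter `c` on a multiset of reals:
choose a surviving member `x` and add `c` to it, add `1` to every other surviving
member, and then delete an element of maximum value from the resulting multiset. -/
def AddStep (c : ℝ) (S T : Multiset ℝ) : Prop :=
  ∃ x ∈ S, ∃ mid : Multiset ℝ,
    mid = (x + c) ::ₘ (S.erase x).map (· + 1) ∧
    ∃ y ∈ mid, (∀ z ∈ mid, z ≤ y) ∧ T = mid.erase y

lemma multiset_exists_ub (s : Multiset ℝ) : ∃ m : ℝ, ∀ z ∈ s, z ≤ m := by
  induction s using Multiset.induction_on with
  | empty => exact ⟨0, by simp⟩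
  | cons a s ih =>
    obtain ⟨m, hm⟩ := ih
    refine ⟨max a m, ?_⟩
    intro z hz
    rcases Multiset.mem_cons.mp hz with h | h
    · exact h ▸ le_max_left a m
    · exact le_trans (hm z h) (le_max_right a m)

lemma sum_map_add_one (s : Multiset ℝ) :
    (s.map (fun z => z + 1)).sum = s.sum + (Multiset.card s : ℝ) := by
  induction s using Multiset.induction_on with
  | empty => simp
  | cons a s ih => simp [ih]; push_cast; ring

/-- let `k, c ≥ 2` be integers and start from a multiset of `k` reals
with average `a`. Run the add-and-delete process for `k − 1` turns, leaving a single
number `a'`. Then for every possible sequence of choices,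
`a' − a ≤ c + k − (c−1)/k − 2`. -/
theorem add_delete_process_bound (k c : ℕ) (hk : 2 ≤ k) (hc : 2 ≤ c)
    (S₀ : Multiset ℝ) (hcard : Multiset.card S₀ = k)
    (f : ℕ → Multiset ℝ) (hf0 : f 0 = S₀)
    (hstep : ∀ i < k - 1, AddStep (c : ℝ) (f i) (f (i + 1))) :
    ∀ a' ∈ f (k - 1), a' - S₀.sum / (k : ℝ) ≤
      (c : ℝ) + (k : ℝ) - ((c : ℝ) - 1) / (k : ℝ) - 2 := by
  have key : ∀ i ≤ k - 1, Multiset.card (f i) = k - i ∧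
      ∃ m : ℝ, (∀ z ∈ f i, z ≤ m) ∧
        (f i).sum + (i : ℝ) * m ≤ S₀.sum + (i : ℝ) * ((k : ℝ) + (c : ℝ) - 1) := by
    intro i
    induction i with
    | zero =>
      intro _
      refine ⟨by simp [hf0, hcard], ?_⟩
      obtain ⟨m, hm⟩ := multiset_exists_ub S₀
      exact ⟨m, by simpa [hf0] using hm, by simp [hf0]⟩
    | succ i ih =>
      intro hi
      have hi' : i < k - 1 := by omega
      obtain ⟨hcardi, m, hub, hsum⟩ := ih (by omega)
      obtain ⟨x, hx, mid, hmid, y, hy, hymax, hT⟩ := hstep i hi'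
      -- cardinalities
      have hce : Multiset.card ((f i).erase x) = k - i - 1 := by
        rw [Multiset.card_erase_of_mem hx, hcardi, Nat.pred_eq_sub_one]
      have hcmid : Multiset.card mid = k - i := by
        rw [hmid]; simp [Nat.pred_eq_sub_one, hce]; omega
      have hcT : Multiset.card (f (i + 1)) = k - (i + 1) := by
        rw [hT, Multiset.card_erase_of_mem hy, hcmid, Nat.pred_eq_sub_one]; omega
      refine ⟨hcT, ?_⟩
      -- sums
      have hsx : x + ((f i).erase x).sum = (f i).sum := by
        rw [← Multiset.sum_cons, Multiset.cons_erase hx]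
      have hcast : ((k - i - 1 : ℕ) : ℝ) = (k : ℝ) - (i : ℝ) - 1 := by
        have h1 : i + 1 ≤ k := by omega
        push_cast [Nat.sub_sub, Nat.cast_sub h1]
        ring
      have hsmid : mid.sum = (f i).sum + (c : ℝ) + ((k : ℝ) - (i : ℝ) - 1) := by
        rw [hmid, Multiset.sum_cons, sum_map_add_one, hce, hcast]
        linarith [hsx]
      have hsT : (f (i + 1)).sum = mid.sum - y := by
        have : y + (f (i + 1)).sum = mid.sum := by
          rw [hT, ← Multiset.sum_cons, Multiset.cons_erase hy]
        linarith
      -- new upper bound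
      refine ⟨min (m + 1) y, ?_, ?_⟩
      · intro z hz
        have hzmid : z ∈ mid := Multiset.mem_of_mem_erase (hT ▸ hz)
        have hzy : z ≤ y := hymax z hzmid
        refine le_min ?_ hzy
        by_cases hcase : y = x + c
        · -- erased the boosted element; rest are all ≤ m + 1
          have hz' : z ∈ ((f i).erase x).map (fun w => w + 1) := by
            have : f (i + 1) = ((f i).erase x).map (fun w => w + 1) := by
              rw [hT, hmid, hcase, Multiset.erase_cons_head]
            rw [← this]; exact hz
          obtain ⟨w, hw, rfl⟩ := Multiset.mem_map.mp hz'
          have := hub w (Multiset.mem_of_mem_erase hw)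
          linarith
        · -- y is itself of the form w+1 ≤ m+1
          have hymem : y ∈ ((f i).erase x).map (fun w => w + 1) := by
            have := Multiset.mem_cons.mp (hmid ▸ hy)
            tauto
          obtain ⟨w, hw, hwy⟩ := Multiset.mem_map.mp hymem
          have hwub := hub w (Multiset.mem_of_mem_erase hw)
          have : y ≤ m + 1 := by rw [← hwy]; linarith
          linarith
      · -- potential inequality
        have hmin1 : (i : ℝ) * min (m + 1) y ≤ (i : ℝ) * (m + 1) :=
          mul_le_mul_of_nonneg_left (min_le_left _ _) (Nat.cast_nonneg i)
        have hmin2 : min (m + 1) y ≤ y := min_le_right _ _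
        have hicast : ((i + 1 : ℕ) : ℝ) = (i : ℝ) + 1 := by push_cast; ring
        rw [hicast, hsT, hsmid]
        nlinarith [hsum]
  -- conclude
  intro a' ha'
  obtain ⟨hc1, m, hub, hsum⟩ := key (k - 1) le_rfl
  have hc1' : Multiset.card (f (k - 1)) = 1 := by rw [hc1]; omega
  obtain ⟨b, hb⟩ := Multiset.card_eq_one.mp hc1'
  have hab : a' = b := by rw [hb] at ha'; simpa using ha'
  have hsum1 : (f (k - 1)).sum = a' := by rw [hb, hab]; simp
  have ham : a' ≤ m := hub a' ha'
  set K : ℝ := (k : ℝ) with hK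
  have hK2 : (2 : ℝ) ≤ K := by rw [hK]; exact_mod_cast hk
  have hK0 : (0 : ℝ) < K := by linarith
  have hkcast : ((k - 1 : ℕ) : ℝ) = K - 1 := by
    push_cast [Nat.cast_sub (by omega : 1 ≤ k)]; ring
  rw [hsum1, hkcast] at hsum
  have hmain : K * a' ≤ S₀.sum + (K - 1) * (K + (c : ℝ) - 1) := by
    nlinarith [mul_le_mul_of_nonneg_left ham (by linarith : (0:ℝ) ≤ K - 1)]
  have e : (c : ℝ) + K - ((c : ℝ) - 1) / K - 2
      = (S₀.sum + (K - 1) * (K + (c : ℝ) - 1)) / K - S₀.sum / K := by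
    field_simp
    ring
  rw [e, sub_le_sub_iff_right, le_div_iff₀ hK0]
  linarith
end

section
/- Let k, c ≥ 2 be integers. The bound a' − a ≤ c + k − (c−1)/k − 2 for the add-and-delete process is tight: for the initial sequence a_1 = a_2 = ⋯ = a_{k−1} = 0, a_k = c − 1 (which has average a = (c−1)/k), there is a sequence of choices (namely, on turn i add c to the element originating from a_i and 1 to all other surviving elements, then delete the maximum) under which the final remaining number a' satisfies a' − a = c + k − 2 − (c−1)/k. -/
/-- the bound `a' − a ≤ c + k − (c−1)/k − 2` for the add-and-delete
process is tight: for `k, c ≥ 2`, starting from `a₁ = ⋯ = a_{k−1} = 0`, `a_k = c − 1`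
(whose average is `a = (c−1)/k`), there is a run of the process for `k − 1` turns after
which the single remaining number `a'` satisfies `a' − a = c + k − 2 − (c−1)/k`. -/
theorem add_delete_process_bound_tight (k c : ℕ) (hk : 2 ≤ k) (hc : 2 ≤ c) :
    ∃ f : ℕ → Multiset ℝ,
      f 0 = Multiset.replicate (k - 1) (0 : ℝ) + {(c : ℝ) - 1} ∧
      (∀ i < k - 1, AddStep (c : ℝ) (f i) (f (i + 1))) ∧
      ∃ a' : ℝ, f (k - 1) = {a'} ∧
        a' - ((c : ℝ) - 1) / (k : ℝ) =
          (c : ℝ) + (k : ℝ) - 2 - ((c : ℝ) - 1) / (k : ℝ) := by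
  refine ⟨fun i => Multiset.replicate (k - 1 - i) ((i : ℕ) : ℝ) + {(c : ℝ) - 1 + i}, ?_, ?_, ?_⟩
  · simp
  · intro i hi
    have hcast : (2 : ℝ) ≤ (c : ℕ) := by exact_mod_cast hc
    -- S = i ::ₘ (replicate (k-2-i) i + {c-1+i})
    have hrep : Multiset.replicate (k - 1 - i) ((i : ℕ) : ℝ)
        = ((i : ℕ) : ℝ) ::ₘ Multiset.replicate (k - 2 - i) ((i : ℕ) : ℝ) := by
      rw [← Multiset.replicate_succ]
      congr 1
      omega
    refine ⟨((i : ℕ) : ℝ), ?_, _, rfl, ((i : ℕ) : ℝ) + c, Multiset.mem_cons_self _ _, ?_, ?_⟩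
    · dsimp only
      rw [hrep]
      exact Multiset.mem_add.2 (Or.inl (Multiset.mem_cons_self _ _))
    · intro z hz
      dsimp only at hz
      rw [hrep] at hz
      simp only [Multiset.cons_add, Multiset.erase_cons_head, Multiset.map_add,
        Multiset.map_replicate, Multiset.map_singleton, Multiset.mem_cons,
        Multiset.mem_add, Multiset.mem_replicate, Multiset.mem_singleton] at hz
      rcases hz with h | ⟨-, h⟩ | h <;> rw [h] <;> linarith
    · dsimp only
      rw [hrep]
      simp only [Multiset.cons_add, Multiset.erase_cons_head, Multiset.map_add,
        Multiset.map_replicate, Multiset.map_singleton, Multiset.erase_cons_head]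
      have h1 : k - 1 - (i + 1) = k - 2 - i := by omega
      rw [h1]
      congr 1
      · congr 1
        push_cast
        ring
      · congr 1
        push_cast
        ring
  · refine ⟨(c : ℝ) - 1 + ((k - 1 : ℕ) : ℝ), ?_, ?_⟩
    · simp
    · have : ((k - 1 : ℕ) : ℝ) = (k : ℝ) - 1 := by
        have : (1 : ℕ) ≤ k := by omega
        push_cast [this]
        ring
      rw [this]
      ring
end

section
/- Let n be a sufficiently large multiple of 7. In the (1:S_b)-biased connectivity game on K_n (Maker moving first), if b ≥ 3n/7 then Breaker has a winning strategy. Hence the threshold bias b for the (1:S_b)-biased connectivity game satisfies b ≤ 3n/7. -/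
open Finset

/-!
Write `n = 7m`; Breaker claims at most `3m` edges per move. He wins once some vertex that Maker
has not touched (a *fresh* vertex) has no unclaimed edge left, since Maker can then never reach
it. A fresh vertex is *hot* if at most `3m` of its edges are unclaimed, so that Breaker surrounds
it in one move, and *cold* otherwise, i.e. if its Breaker degree is below `4m - 1`.

While more than `3m + 1` vertices are fresh, Breaker *pours*: from a dead vertex of Breaker
degree below `3m` he claims edges to the `3m` cold vertices of least Breaker degree, keeping all
cold degrees within one of each other. Maker kills at most two cold vertices per move, so the
total cold degree stays at least `x λ(x)`, where `x` is the number of cold vertices and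
`λ = massBound m` approximates `1.47 m log (7m / x)`; pouring stops early only once the least
cold degree has reached `2m`. Either way, when `x ≤ 3m + 1` the least cold degree `l` satisfies
`l + x ≥ 4m`.

Breaker then *locks*: he claims all edges from one fresh vertex `z` to the other fresh vertices.
Now `z` is hot, so Maker must claim an edge at `z`, and it leads to a dead vertex; every other
cold vertex gained one unit of degree, so `l + x ≥ 4m` survives while `x` drops by one. This
cannot go on forever: it ends with two hot vertices joined by a claimed edge, and Maker can save
only one of them.
-/

namespace StarBiasConnectivity

noncomputable section

section Pick

variable {α : Type*}

def pick (s : Finset α) (k : ℕ) : Finset α :=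
  Classical.choose (s.exists_subset_card_eq (min_le_right k #s))

lemma pick_subset (s : Finset α) (k : ℕ) : pick s k ⊆ s :=
  (Classical.choose_spec (s.exists_subset_card_eq (min_le_right k #s))).1

lemma card_pick (s : Finset α) (k : ℕ) : #(pick s k) = min k #s :=
  (Classical.choose_spec (s.exists_subset_card_eq (min_le_right k #s))).2

end Pick

variable {n : ℕ}

section Board

lemma mem_board {e : Sym2 (Fin n)} : e ∈ board n ↔ ¬ e.IsDiag := by
  simp [board]

lemma card_filter_mem_board (v : Fin n) : #((board n).filter (v ∈ ·)) = n - 1 := by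
  have h : board n = (⊤ : SimpleGraph (Fin n)).edgeFinset := by
    ext e
    simp [mem_board]
  rw [h, ← SimpleGraph.incidenceFinset_eq_filter, SimpleGraph.card_incidenceFinset_eq_degree,
    SimpleGraph.complete_graph_degree, Fintype.card_fin]

lemma exists_eq_mk_of_mem {e : Sym2 (Fin n)} {c : Fin n} (hc : c ∈ e) (he : ¬ e.IsDiag) :
    ∃ w, w ≠ c ∧ e = s(c, w) := by
  induction e using Sym2.ind with
  | _ x y =>
    rw [Sym2.mk_isDiag_iff] at he
    rcases Sym2.mem_iff.1 hc with rfl | rfl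
    · exact ⟨y, Ne.symm he, rfl⟩
    · exact ⟨x, he, Sym2.eq_swap⟩

lemma degIn_union {A S : Finset (Sym2 (Fin n))} (h : Disjoint A S) (v : Fin n) :
    degIn (A ∪ S) v = degIn A v + degIn S v := by
  simp only [degIn, filter_union]
  exact card_union_of_disjoint (disjoint_filter_filter h)

lemma degIn_image_mk {c : Fin n} {T : Finset (Fin n)} (hc : c ∉ T) (v : Fin n) :
    degIn (T.image (s(c, ·))) v = if v = c then #T else if v ∈ T then 1 else 0 := by
  unfold degIn
  split_ifs with hvc hvT
  · subst hvc
    rw [filter_true_of_mem (by simp), card_image_of_injective _ (fun _ _ => Sym2.congr_right.1)]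
  · rw [card_eq_one]
    refine ⟨s(c, v), ?_⟩
    ext e
    simp only [mem_filter, mem_image, mem_singleton]
    constructor
    · rintro ⟨⟨w, -, rfl⟩, hv⟩
      rcases Sym2.mem_iff.1 hv with h | rfl
      exacts [absurd h hvc, rfl]
    · rintro rfl
      exact ⟨⟨v, hvT, rfl⟩, Sym2.mem_mk_right _ _⟩
  · rw [card_eq_zero, filter_eq_empty_iff]
    rintro _ he hv
    obtain ⟨w, hw, rfl⟩ := mem_image.1 he
    rcases Sym2.mem_iff.1 hv with rfl | rfl
    exacts [hvc rfl, hvT hw]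

end Board

section Position

variable {p : MBPos n} {v c : Fin n} {e : Sym2 (Fin n)}

def fresh (p : MBPos n) : Finset (Fin n) :=
  univ.filter fun v => ∀ e ∈ p.M, v ∉ e

def unclaimedAt (p : MBPos n) (v : Fin n) : Finset (Sym2 (Fin n)) :=
  (board n).filter fun e => v ∈ e ∧ e ∉ p.M ∧ e ∉ p.B

structure IsValid (p : MBPos n) : Prop where
  M_subset : p.M ⊆ board n
  B_subset : p.B ⊆ board n
  disjoint : Disjoint p.M p.B

@[simp]
lemma mem_fresh : v ∈ fresh p ↔ ∀ e ∈ p.M, v ∉ e := by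
  simp [fresh]

@[simp]
lemma mem_unclaimedAt : e ∈ unclaimedAt p v ↔ e ∈ board n ∧ v ∈ e ∧ e ∉ p.M ∧ e ∉ p.B := by
  simp [unclaimedAt]

lemma IsValid.card_unclaimedAt_add_degIn (hp : IsValid p) (v : Fin n) :
    #(unclaimedAt p v) + degIn p.M v + degIn p.B v = n - 1 := by
  have hclaimed : ((board n).filter (v ∈ ·)).filter (fun e => ¬ (e ∉ p.M ∧ e ∉ p.B)) =
      (p.M ∪ p.B).filter (v ∈ ·) := by
    ext e
    simp only [mem_filter, mem_union, not_and_or, not_not]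
    constructor
    · rintro ⟨⟨-, hv⟩, hMB⟩
      exact ⟨hMB, hv⟩
    · rintro ⟨hMB, hv⟩
      exact ⟨⟨hMB.elim (hp.M_subset ·) (hp.B_subset ·), hv⟩, hMB⟩
  have hfree : ((board n).filter (v ∈ ·)).filter (fun e => e ∉ p.M ∧ e ∉ p.B) =
      unclaimedAt p v := by
    rw [filter_filter]; rfl
  rw [add_assoc, ← degIn_union hp.disjoint, degIn, ← hclaimed, ← hfree,
    card_filter_add_card_filter_not, card_filter_mem_board]

lemma degIn_M_eq_zero_of_mem_fresh (hv : v ∈ fresh p) : degIn p.M v = 0 := by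
  rw [degIn, card_eq_zero, filter_eq_empty_iff]
  exact fun e he => mem_fresh.1 hv e he

lemma IsValid.card_unclaimedAt (hp : IsValid p) (hv : v ∈ fresh p) :
    #(unclaimedAt p v) = n - 1 - degIn p.B v := by
  have := hp.card_unclaimedAt_add_degIn v
  rw [degIn_M_eq_zero_of_mem_fresh hv] at this
  omega

def Surrounded (p : MBPos n) (v : Fin n) : Prop :=
  v ∈ fresh p ∧ unclaimedAt p v = ∅

def claimStar (p : MBPos n) (c : Fin n) (T : Finset (Fin n)) : Finset (Sym2 (Fin n)) :=
  (unclaimedAt p c).filter fun e => ∀ u ∈ e, u = c ∨ u ∈ T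

lemma claimStar_subset_unclaimedAt (T : Finset (Fin n)) : claimStar p c T ⊆ unclaimedAt p c :=
  filter_subset _ _

lemma claimStar_subset_image (T : Finset (Fin n)) :
    claimStar p c T ⊆ (T.erase c).image (s(c, ·)) := by
  intro e he
  obtain ⟨⟨hb, hc, -⟩, hT⟩ := by simpa [claimStar] using he
  obtain ⟨w, hwc, rfl⟩ := exists_eq_mk_of_mem hc (mem_board.1 hb)
  exact mem_image.2 ⟨w, mem_erase.2 ⟨hwc, (hT w (Sym2.mem_mk_right _ _)).resolve_left hwc⟩, rfl⟩

lemma claimStar_eq_image {T : Finset (Fin n)}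
    (h : ∀ w ∈ T, w ≠ c → s(c, w) ∉ p.M ∧ s(c, w) ∉ p.B) :
    claimStar p c T = (T.erase c).image (s(c, ·)) := by
  refine (claimStar_subset_image T).antisymm fun e he => ?_
  obtain ⟨w, hw, rfl⟩ := mem_image.1 he
  obtain ⟨hwc, hwT⟩ := mem_erase.1 hw
  refine mem_filter.2 ⟨mem_unclaimedAt.2 ⟨?_, Sym2.mem_mk_left _ _, h w hwT hwc⟩, ?_⟩
  · exact mem_board.2 (by simpa [Sym2.mk_isDiag_iff] using Ne.symm hwc)
  · intro u hu
    rcases Sym2.mem_iff.1 hu with rfl | rfl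
    exacts [Or.inl rfl, Or.inr hwT]

lemma card_claimStar_le (T : Finset (Fin n)) : #(claimStar p c T) ≤ #(T.erase c) :=
  (card_le_card (claimStar_subset_image T)).trans card_image_le

lemma claimStar_empty : claimStar p c ∅ = ∅ :=
  subset_empty.1 (by simpa using claimStar_subset_image (p := p) (c := c) ∅)

end Position

section Moves

variable {p : MBPos n} {v : Fin n} {e : Sym2 (Fin n)}

lemma makerMove_of_unclaimed (h : e ∈ board n ∧ e ∉ p.M ∧ e ∉ p.B) :
    makerMove p e = ⟨insert e p.M, p.B⟩ := if_pos h

lemma makerMove_of_not_unclaimed (h : ¬ (e ∈ board n ∧ e ∉ p.M ∧ e ∉ p.B)) :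
    makerMove p e = p := if_neg h

@[simp]
lemma makerMove_B : (makerMove p e).B = p.B := by
  unfold makerMove; split_ifs <;> rfl

lemma makerMove_M_subset : p.M ⊆ (makerMove p e).M := by
  unfold makerMove; split_ifs
  exacts [subset_insert _ _, subset_rfl]

lemma makerMove_M_subset_insert : (makerMove p e).M ⊆ insert e p.M := by
  unfold makerMove; split_ifs
  exacts [subset_rfl, subset_insert _ _]

lemma fresh_makerMove_subset : fresh (makerMove p e) ⊆ fresh p :=
  fun _ hv => mem_fresh.2 fun f hf => mem_fresh.1 hv f (makerMove_M_subset hf)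

lemma mem_fresh_makerMove (hv : v ∈ fresh p) (hve : v ∉ e) : v ∈ fresh (makerMove p e) := by
  refine mem_fresh.2 fun f hf => ?_
  rcases mem_insert.1 (makerMove_M_subset_insert hf) with rfl | hf
  exacts [hve, mem_fresh.1 hv f hf]

lemma fresh_sdiff_makerMove_subset : fresh p \ fresh (makerMove p e) ⊆ e.toFinset := by
  intro v hv
  obtain ⟨hv, hv'⟩ := mem_sdiff.1 hv
  by_contra hve
  exact hv' (mem_fresh_makerMove hv (by simpa using hve))

lemma card_fresh_sdiff_makerMove_le : #(fresh p \ fresh (makerMove p e)) ≤ 2 :=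
  (card_le_card fresh_sdiff_makerMove_subset).trans (by rw [Sym2.card_toFinset]; split <;> omega)

lemma unclaimedAt_makerMove (hv : v ∈ fresh (makerMove p e)) :
    unclaimedAt (makerMove p e) v = unclaimedAt p v := by
  by_cases h : e ∈ board n ∧ e ∉ p.M ∧ e ∉ p.B
  · have hve : v ∉ e := mem_fresh.1 hv e (by simp [makerMove_of_unclaimed h])
    ext f
    rw [makerMove_of_unclaimed h]
    simp only [mem_unclaimedAt, mem_insert, not_or]
    constructor
    · rintro ⟨hb, hvf, ⟨-, hM⟩, hB⟩
      exact ⟨hb, hvf, hM, hB⟩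
    · rintro ⟨hb, hvf, hM, hB⟩
      exact ⟨hb, hvf, ⟨by rintro rfl; exact hve hvf, hM⟩, hB⟩
  · rw [makerMove_of_not_unclaimed h]

lemma IsValid.makerMove (hp : IsValid p) (e : Sym2 (Fin n)) : IsValid (makerMove p e) := by
  by_cases h : e ∈ board n ∧ e ∉ p.M ∧ e ∉ p.B
  · rw [makerMove_of_unclaimed h]
    exact ⟨insert_subset h.1 hp.M_subset, hp.B_subset, disjoint_insert_left.2 ⟨h.2.2, hp.disjoint⟩⟩
  · rwa [makerMove_of_not_unclaimed h]

@[simp]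
lemma breakerMove_M (S : Finset (Sym2 (Fin n))) : (breakerMove p S).M = p.M := rfl

@[simp]
lemma breakerMove_B (S : Finset (Sym2 (Fin n))) : (breakerMove p S).B = p.B ∪ S := rfl

@[simp]
lemma fresh_breakerMove (S : Finset (Sym2 (Fin n))) : fresh (breakerMove p S) = fresh p := rfl

lemma unclaimedAt_breakerMove (S : Finset (Sym2 (Fin n))) (v : Fin n) :
    unclaimedAt (breakerMove p S) v = unclaimedAt p v \ S := by
  ext f
  simp only [mem_unclaimedAt, mem_sdiff, breakerMove_B, mem_union, not_or]
  tauto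

lemma IsValid.breakerMove (hp : IsValid p) {S : Finset (Sym2 (Fin n))} (hS : S ⊆ board n)
    (hSM : Disjoint p.M S) : IsValid (breakerMove p S) :=
  ⟨hp.M_subset, union_subset hp.B_subset hS, disjoint_union_right.2 ⟨hp.disjoint, hSM⟩⟩

lemma Surrounded.breakerMove (h : Surrounded p v) (S : Finset (Sym2 (Fin n))) :
    Surrounded (breakerMove p S) v :=
  ⟨h.1, by rw [unclaimedAt_breakerMove, h.2, empty_sdiff]⟩

lemma Surrounded.makerMove (h : Surrounded p v) (e : Sym2 (Fin n)) :
    Surrounded (makerMove p e) v := by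
  by_cases he : e ∈ board n ∧ e ∉ p.M ∧ e ∉ p.B
  · have hve : v ∉ e := fun hve => by
      simpa [h.2] using (mem_unclaimedAt (p := p) (v := v)).2 ⟨he.1, hve, he.2⟩
    have hv := mem_fresh_makerMove h.1 hve
    exact ⟨hv, by rw [unclaimedAt_makerMove hv, h.2]⟩
  · rwa [makerMove_of_not_unclaimed he]

end Moves

lemma not_connWin_of_forall_notMem (hn : 2 ≤ n) {M : Finset (Sym2 (Fin n))} {v : Fin n}
    (hv : ∀ e ∈ M, v ∉ e) : ¬ ConnWin M := by
  have : Nontrivial (Fin n) := Fin.nontrivial_iff_two_le.2 hn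
  intro hconn
  refine hconn.preconnected.not_isIsolated v fun w hvw => ?_
  rw [SimpleGraph.fromEdgeSet_adj] at hvw
  exact hv _ hvw.1 (Sym2.mem_mk_left _ _)

section Strategy

variable (m : ℕ) (p : MBPos n)

def hot : Finset (Fin n) :=
  (fresh p).filter fun v => #(unclaimedAt p v) ≤ 3 * m

def cold : Finset (Fin n) :=
  (fresh p).filter fun v => 3 * m < #(unclaimedAt p v)

def minColdDeg : ℕ :=
  if h : (cold m p).Nonempty then (cold m p).inf' h (degIn p.B) else 0

def eligible : Finset (Fin n) :=
  (cold m p).filter fun v => degIn p.B v < 2 * m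

def minEligible : Finset (Fin n) :=
  (eligible m p).filter fun v => degIn p.B v = minColdDeg m p

/-- The (at most `3m`) eligible vertices of least Breaker degree. -/
def pourTargets : Finset (Fin n) :=
  if 3 * m ≤ #(minEligible m p) then pick (minEligible m p) (3 * m)
  else minEligible m p ∪ pick (eligible m p \ minEligible m p) (3 * m - #(minEligible m p))

def pourCenters : Finset (Fin n) :=
  univ.filter fun d => d ∉ fresh p ∧ degIn p.B d < 3 * m

def breakerStrategy : Finset (Sym2 (Fin n)) :=
  if h : (hot m p).Nonempty then unclaimedAt p ((hot m p).min' h)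
  else if h : (fresh p).Nonempty ∧ #(fresh p) ≤ 3 * m + 1 then
    claimStar p ((fresh p).min' h.1) (fresh p)
  else if h : (pourCenters m p).Nonempty then
    claimStar p ((pourCenters m p).min' h) (pourTargets m p)
  else ∅

end Strategy

section StrategyFacts

variable {m : ℕ} {p : MBPos n} {v : Fin n}

lemma hot_subset_fresh : hot m p ⊆ fresh p := filter_subset _ _

lemma cold_subset_fresh : cold m p ⊆ fresh p := filter_subset _ _

lemma cold_eq_fresh_sdiff_hot : cold m p = fresh p \ hot m p := by
  ext v
  simp only [hot, cold, mem_sdiff, mem_filter, not_and, not_le]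
  exact ⟨fun h => ⟨h.1, fun _ => h.2⟩, fun h => ⟨h.1, h.2 h.1⟩⟩

lemma fresh_eq_cold_of_hot_eq_empty (h : hot m p = ∅) : fresh p = cold m p := by
  rw [cold_eq_fresh_sdiff_hot, h, sdiff_empty]

lemma minEligible_subset_eligible : minEligible m p ⊆ eligible m p := filter_subset _ _

lemma eligible_subset_cold : eligible m p ⊆ cold m p := filter_subset _ _

lemma pourTargets_subset_eligible : pourTargets m p ⊆ eligible m p := by
  unfold pourTargets
  split_ifs
  · exact (pick_subset _ _).trans minEligible_subset_eligible
  · exact union_subset minEligible_subset_eligible ((pick_subset _ _).trans sdiff_subset)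

lemma card_pourTargets : #(pourTargets m p) = min (3 * m) #(eligible m p) := by
  have hsub := card_le_card (minEligible_subset_eligible (m := m) (p := p))
  unfold pourTargets
  split_ifs with h
  · rw [card_pick]
    omega
  · rw [card_union_of_disjoint (disjoint_of_subset_right (pick_subset _ _) disjoint_sdiff),
      card_pick, card_sdiff_of_subset minEligible_subset_eligible]
    omega

lemma pourTargets_subset_or_superset :
    pourTargets m p ⊆ minEligible m p ∨ minEligible m p ⊆ pourTargets m p := by
  unfold pourTargets
  split_ifs
  exacts [Or.inl (pick_subset _ _), Or.inr subset_union_left]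

lemma breakerStrategy_subset_unclaimedAt (hn : 0 < n) (m : ℕ) (p : MBPos n) :
    ∃ c, breakerStrategy m p ⊆ unclaimedAt p c := by
  unfold breakerStrategy
  split_ifs
  exacts [⟨_, subset_rfl⟩, ⟨_, claimStar_subset_unclaimedAt _⟩,
    ⟨_, claimStar_subset_unclaimedAt _⟩, ⟨⟨0, hn⟩, empty_subset _⟩]

lemma card_breakerStrategy_le (m : ℕ) (p : MBPos n) : #(breakerStrategy m p) ≤ 3 * m := by
  unfold breakerStrategy
  split_ifs with h₁ h₂
  · exact (mem_filter.1 ((hot m p).min'_mem h₁)).2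
  · have := card_claimStar_le (p := p) (c := (fresh p).min' h₂.1) (fresh p)
    rw [card_erase_of_mem ((fresh p).min'_mem h₂.1)] at this
    omega
  · have := card_claimStar_le (p := p) (c := (pourCenters m p).min' ‹_›) (pourTargets m p)
    have := card_erase_le (s := pourTargets m p) (a := (pourCenters m p).min' ‹_›)
    have := card_pourTargets (m := m) (p := p)
    omega
  · simp

lemma legalBreaker_breakerStrategy (hn : 0 < n) {b : ℕ} (hb : 3 * m ≤ b) :
    LegalBreaker (StarBias b) (breakerStrategy (n := n) m) := by
  intro p
  obtain ⟨c, hc⟩ := breakerStrategy_subset_unclaimedAt hn m p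
  have mem : ∀ e ∈ breakerStrategy m p, e ∈ board n ∧ c ∈ e ∧ e ∉ p.M ∧ e ∉ p.B :=
    fun e he => mem_unclaimedAt.1 (hc he)
  exact ⟨fun e he => (mem e he).1, fun e he => (mem e he).2.2,
    (card_breakerStrategy_le m p).trans hb, c, fun e he => (mem e he).2.1⟩

lemma breakerStrategy_of_hot (h : (hot m p).Nonempty) :
    ∃ z ∈ hot m p, breakerStrategy m p = unclaimedAt p z :=
  ⟨_, (hot m p).min'_mem h, dif_pos h⟩

lemma breakerStrategy_of_lock (hH : hot m p = ∅) (hF : (fresh p).Nonempty)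
    (hx : #(fresh p) ≤ 3 * m + 1) :
    breakerStrategy m p = claimStar p ((fresh p).min' hF) (fresh p) := by
  rw [breakerStrategy, dif_neg (by simp [hH]), dif_pos ⟨hF, hx⟩]

lemma breakerStrategy_of_pour (hH : hot m p = ∅) (hx : 3 * m + 1 < #(fresh p)) :
    (∃ d ∈ pourCenters m p, breakerStrategy m p = claimStar p d (pourTargets m p)) ∨
      (pourCenters m p = ∅ ∧ breakerStrategy m p = ∅) := by
  rw [breakerStrategy, dif_neg (by simp [hH]), dif_neg (by omega)]
  by_cases hd : (pourCenters m p).Nonempty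
  · exact Or.inl ⟨_, (pourCenters m p).min'_mem hd, dif_pos hd⟩
  · exact Or.inr ⟨not_nonempty_iff_eq_empty.1 hd, dif_neg hd⟩

end StrategyFacts

section ColdVertices

variable {m : ℕ} {p : MBPos n} {v : Fin n}

lemma IsValid.mem_cold_iff (hn : n = 7 * m) (hp : IsValid p) :
    v ∈ cold m p ↔ v ∈ fresh p ∧ degIn p.B v + 1 < 4 * m := by
  unfold cold
  rw [mem_filter]
  refine and_congr_right fun hv => ?_
  rw [hp.card_unclaimedAt hv]
  omega

lemma IsValid.mem_hot_iff (hn : n = 7 * m) (hp : IsValid p) :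
    v ∈ hot m p ↔ v ∈ fresh p ∧ 4 * m ≤ degIn p.B v + 1 := by
  unfold hot
  rw [mem_filter]
  refine and_congr_right fun hv => ?_
  rw [hp.card_unclaimedAt hv]
  omega

lemma minColdDeg_le (hv : v ∈ cold m p) : minColdDeg m p ≤ degIn p.B v := by
  rw [minColdDeg, dif_pos ⟨v, hv⟩]
  exact inf'_le _ hv

lemma exists_degIn_eq_minColdDeg (h : (cold m p).Nonempty) :
    ∃ v ∈ cold m p, degIn p.B v = minColdDeg m p := by
  rw [minColdDeg, dif_pos h]
  obtain ⟨v, hv, hmin⟩ := exists_mem_eq_inf' h (degIn p.B)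
  exact ⟨v, hv, hmin.symm⟩

lemma IsValid.minColdDeg_add_one_lt (hn : n = 7 * m) (hp : IsValid p)
    (hne : (cold m p).Nonempty) : minColdDeg m p + 1 < 4 * m := by
  obtain ⟨v, hv⟩ := hne
  have := minColdDeg_le hv
  have := ((hp.mem_cold_iff hn).1 hv).2
  omega

def ColdBalanced (m : ℕ) (p : MBPos n) : Prop :=
  ∀ v ∈ cold m p, degIn p.B v = minColdDeg m p ∨ degIn p.B v = minColdDeg m p + 1

lemma coldBalanced_of_forall (a : ℕ) (h : ∀ v ∈ cold m p, degIn p.B v = a ∨ degIn p.B v = a + 1)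
    (hne : (cold m p).Nonempty) : ColdBalanced m p ∧ a ≤ minColdDeg m p := by
  obtain ⟨v₀, hv₀, hmin⟩ := exists_degIn_eq_minColdDeg hne
  have ha : a ≤ minColdDeg m p := by rcases h v₀ hv₀ with h | h <;> omega
  refine ⟨fun v hv => ?_, ha⟩
  have := minColdDeg_le hv
  rcases h v hv with h | h <;> omega

lemma pourTargets_eq_empty (h : 2 * m ≤ minColdDeg m p) : pourTargets m p = ∅ := by
  refine subset_empty.1 (pourTargets_subset_eligible.trans (subset_empty.2 ?_))
  exact filter_false_of_mem fun v hv => not_lt.2 (h.trans (minColdDeg_le hv))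

def coldMass (m : ℕ) (p : MBPos n) : ℕ :=
  ∑ v ∈ cold m p, degIn p.B v

lemma card_cold_mul_minColdDeg_le : #(cold m p) * minColdDeg m p ≤ coldMass m p := by
  rw [card_eq_sum_ones, sum_mul, one_mul]
  exact sum_le_sum fun v hv => minColdDeg_le hv

lemma ColdBalanced.coldMass_le (h : ColdBalanced m p) :
    coldMass m p ≤ #(cold m p) * (minColdDeg m p + 1) := by
  rw [card_eq_sum_ones, sum_mul, one_mul]
  exact sum_le_sum fun v hv => by rcases h v hv with h | h <;> omega

end ColdVertices

section MakerMoveEffects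

variable {m : ℕ} {p : MBPos n} {e : Sym2 (Fin n)}

lemma cold_makerMove : cold m (makerMove p e) = (cold m p).filter (· ∈ fresh (makerMove p e)) := by
  ext v
  simp only [cold, mem_filter]
  constructor
  · rintro ⟨hv, hc⟩
    rw [unclaimedAt_makerMove hv] at hc
    exact ⟨⟨fresh_makerMove_subset hv, hc⟩, hv⟩
  · rintro ⟨⟨-, hc⟩, hv⟩
    rw [unclaimedAt_makerMove hv]
    exact ⟨hv, hc⟩

lemma cold_makerMove_subset : cold m (makerMove p e) ⊆ cold m p := by
  rw [cold_makerMove]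
  exact filter_subset _ _

lemma cold_sdiff_makerMove_subset :
    cold m p \ cold m (makerMove p e) ⊆ fresh p \ fresh (makerMove p e) := by
  intro v hv
  simp only [cold_makerMove, mem_sdiff, mem_filter, not_and] at hv ⊢
  exact ⟨cold_subset_fresh hv.1, hv.2 hv.1⟩

lemma card_cold_le_card_cold_makerMove : #(cold m p) ≤ #(cold m (makerMove p e)) + 2 := by
  have h₁ := card_sdiff_add_card_eq_card (cold_makerMove_subset (m := m) (p := p) (e := e))
  have h₂ := (card_le_card (cold_sdiff_makerMove_subset (m := m) (p := p) (e := e))).trans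
    card_fresh_sdiff_makerMove_le
  omega

lemma hot_makerMove_subset : hot m (makerMove p e) ⊆ hot m p := by
  intro v hv
  simp only [hot, mem_filter] at hv ⊢
  rw [unclaimedAt_makerMove hv.1] at hv
  exact ⟨fresh_makerMove_subset hv.1, hv.2⟩

lemma mem_hot_makerMove {z : Fin n} (hz : z ∈ hot m p) (hzq : z ∈ fresh (makerMove p e)) :
    z ∈ hot m (makerMove p e) := by
  simp only [hot, mem_filter] at hz ⊢
  rw [unclaimedAt_makerMove hzq]
  exact ⟨hzq, hz.2⟩

lemma minColdDeg_le_makerMove (hq : (cold m (makerMove p e)).Nonempty) :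
    minColdDeg m p ≤ minColdDeg m (makerMove p e) := by
  obtain ⟨v, hv, hmin⟩ := exists_degIn_eq_minColdDeg hq
  rw [← hmin, makerMove_B]
  exact minColdDeg_le (cold_makerMove_subset hv)

lemma ColdBalanced.makerMove (h : ColdBalanced m p) (hq : (cold m (makerMove p e)).Nonempty) :
    ColdBalanced m (makerMove p e) := by
  refine (coldBalanced_of_forall (minColdDeg m p) (fun v hv => ?_) hq).1
  rw [makerMove_B]
  exact h v (cold_makerMove_subset hv)

lemma minColdDeg_makerMove_of_cold_eq (h : cold m (makerMove p e) = cold m p) :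
    minColdDeg m (makerMove p e) = minColdDeg m p := by
  simp only [minColdDeg, h, makerMove_B]

lemma coldMass_makerMove_of_cold_eq (h : cold m (makerMove p e) = cold m p) :
    coldMass m (makerMove p e) = coldMass m p := by
  simp only [coldMass, h, makerMove_B]

/-- Each cold vertex Maker kills takes at most `minColdDeg + 1` of Breaker degree with it. -/
lemma coldMass_le_coldMass_makerMove (h : ColdBalanced m p) :
    coldMass m p ≤ coldMass m (makerMove p e) +
      (#(cold m p) - #(cold m (makerMove p e))) * (minColdDeg m p + 1) := by
  have hsub := cold_makerMove_subset (m := m) (p := p) (e := e)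
  have hkilled : ∑ v ∈ cold m p \ cold m (makerMove p e), degIn p.B v ≤
      #(cold m p \ cold m (makerMove p e)) * (minColdDeg m p + 1) := by
    rw [card_eq_sum_ones, sum_mul, one_mul]
    exact sum_le_sum fun v hv => by rcases h v (mem_sdiff.1 hv).1 with h | h <;> omega
  rw [card_sdiff_of_subset hsub] at hkilled
  rw [coldMass, coldMass, makerMove_B, ← sum_sdiff hsub]
  omega

end MakerMoveEffects

section StarMove

variable {p : MBPos n} {c : Fin n} {T : Finset (Fin n)}

lemma isValid_breakerMove_image_mk (hp : IsValid p) (hcT : c ∉ T)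
    (hfree : ∀ w ∈ T, s(c, w) ∉ p.M) :
    IsValid (breakerMove p (T.image (s(c, ·)))) := by
  refine hp.breakerMove (fun e he => ?_) (disjoint_right.2 fun e he => ?_)
  · obtain ⟨w, hw, rfl⟩ := mem_image.1 he
    exact mem_board.2 (by rw [Sym2.mk_isDiag_iff]; rintro rfl; exact hcT hw)
  · obtain ⟨w, hw, rfl⟩ := mem_image.1 he
    exact hfree w hw

lemma degIn_breakerMove_image_mk (hcT : c ∉ T) (hfree : ∀ w ∈ T, s(c, w) ∉ p.B) (v : Fin n) :
    degIn (breakerMove p (T.image (s(c, ·)))).B v =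
      degIn p.B v + if v = c then #T else if v ∈ T then 1 else 0 := by
  rw [breakerMove_B, degIn_union, degIn_image_mk hcT]
  refine disjoint_right.2 fun e he => ?_
  obtain ⟨w, hw, rfl⟩ := mem_image.1 he
  exact hfree w hw

end StarMove

section MassBound

/-- A convex piecewise-linear stand-in for `x ↦ 1.47 m log (7m / x)`, the solution of
`x λ' = -1.47 m`: wherever a piece is active its slope `-s` satisfies `s x ≤ 1.47 m`
(`exists_active_piece`). -/
def massBound (m : ℕ) (x : ℚ) : ℚ :=
  max (max (max (147 / 100 * m - 21 / 100 * x) (861 / 500 * m - 147 / 580 * x))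
      (max (7161 / 3625 * m - 49 / 160 * x) (64393 / 29000 * m - 147 / 400 * x)))
    (5663 / 2320 * m - 147 / 340 * x)

variable {m : ℕ}

lemma massBound_seven_mul_le_zero : massBound m (7 * m) ≤ 0 := by
  have hm : (0 : ℚ) ≤ m := Nat.cast_nonneg m
  unfold massBound
  refine max_le (max_le (max_le ?_ ?_) (max_le ?_ ?_)) ?_ <;> linarith

lemma exists_active_piece {y : ℚ} (hy7 : y ≤ 7 * m) :
    ∃ a s : ℚ, massBound m y = a * m - s * y ∧ (∀ x, a * m - s * x ≤ massBound m x) ∧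
      0 ≤ s ∧ s * y ≤ 147 / 100 * m := by
  have hm : (0 : ℚ) ≤ m := Nat.cast_nonneg m
  have h1 : ∀ x, 147 / 100 * m - 21 / 100 * x ≤ massBound m x := fun x =>
    ((le_max_left _ _).trans (le_max_left _ _)).trans (le_max_left _ _)
  have h2 : ∀ x, 861 / 500 * m - 147 / 580 * x ≤ massBound m x := fun x =>
    ((le_max_right _ _).trans (le_max_left _ _)).trans (le_max_left _ _)
  have h3 : ∀ x, 7161 / 3625 * m - 49 / 160 * x ≤ massBound m x := fun x =>
    ((le_max_left _ _).trans (le_max_right _ _)).trans (le_max_left _ _)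
  have h4 : ∀ x, 64393 / 29000 * m - 147 / 400 * x ≤ massBound m x := fun x =>
    ((le_max_right _ _).trans (le_max_right _ _)).trans (le_max_left _ _)
  have h5 : ∀ x, 5663 / 2320 * m - 147 / 340 * x ≤ massBound m x := fun x => le_max_right _ _
  -- each piece is active only on an interval `y ≤ c m` on which `s y ≤ 1.47 m`
  have hcases : massBound m y = 147 / 100 * m - 21 / 100 * y ∨
      (massBound m y = 861 / 500 * m - 147 / 580 * y ∧ y ≤ 29 / 5 * m) ∨
      (massBound m y = 7161 / 3625 * m - 49 / 160 * y ∧ y ≤ 24 / 5 * m) ∨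
      (massBound m y = 64393 / 29000 * m - 147 / 400 * y ∧ y ≤ 4 * m) ∨
      (massBound m y = 5663 / 2320 * m - 147 / 340 * y ∧ y ≤ 17 / 5 * m) := by
    unfold massBound
    simp only [max_def]
    split_ifs <;> first
      | exact Or.inl rfl
      | exact Or.inr (Or.inl ⟨rfl, by linarith⟩)
      | exact Or.inr (Or.inr (Or.inl ⟨rfl, by linarith⟩))
      | exact Or.inr (Or.inr (Or.inr (Or.inl ⟨rfl, by linarith⟩)))
      | exact Or.inr (Or.inr (Or.inr (Or.inr ⟨rfl, by linarith⟩)))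
  rcases hcases with h | ⟨h, hy'⟩ | ⟨h, hy'⟩ | ⟨h, hy'⟩ | ⟨h, hy'⟩
  · exact ⟨_, _, h, h1, by norm_num, by linarith⟩
  · exact ⟨_, _, h, h2, by norm_num, by linarith⟩
  · exact ⟨_, _, h, h3, by norm_num, by linarith⟩
  · exact ⟨_, _, h, h4, by norm_num, by linarith⟩
  · exact ⟨_, _, h, h5, by norm_num, by linarith⟩

lemma mul_massBound_sub_le (hm : 100 ≤ m) {x y : ℚ} (hy : 0 ≤ y) (hyx : y ≤ x)
    (hx7 : x ≤ 7 * m) (hxy : x - y ≤ 2) :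
    y * (massBound m y - massBound m x) ≤ 3 * m - (x - y) := by
  have hm' : (100 : ℚ) ≤ m := by exact_mod_cast hm
  obtain ⟨a, s, hy_eq, hpiece, hs, hsy⟩ := exists_active_piece (m := m) (hyx.trans hx7)
  have hdiff : massBound m y - massBound m x ≤ s * (x - y) := by
    linarith [hpiece x]
  calc y * (massBound m y - massBound m x) ≤ y * (s * (x - y)) :=
        mul_le_mul_of_nonneg_left hdiff hy
    _ = s * y * (x - y) := by ring
    _ ≤ 147 / 100 * m * (x - y) := mul_le_mul_of_nonneg_right hsy (by linarith)
    _ ≤ 3 * m - (x - y) := by nlinarith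

lemma le_add_massBound (hm : 100 ≤ m) {x : ℚ} (hx : 3 * m ≤ x) : 4 * m + 3 ≤ x + massBound m x := by
  have hm' : (100 : ℚ) ≤ m := by exact_mod_cast hm
  have : 5663 / 2320 * m - 147 / 340 * x ≤ massBound m x := le_max_right _ _
  linarith

/-- One round of the pour phase preserves `x λ(x) ≤ mass`: Maker kills `x - x' ≤ 2` cold
vertices, each of Breaker degree at most `l + 1`, and Breaker then adds `3m` to the mass. -/
lemma mass_bound_step (hm : 100 ≤ m) {x x' l M M' : ℕ} (hx' : x' ≤ x) (hxx' : x ≤ x' + 2)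
    (hx7 : x ≤ 7 * m) (hl : x * l ≤ M) (hM : (x : ℚ) * massBound m x ≤ M)
    (hM' : M ≤ M' + (x - x') * (l + 1)) :
    (x' : ℚ) * massBound m x' ≤ M' + 3 * m := by
  rcases Nat.eq_zero_or_pos x with rfl | hx0
  · obtain rfl : x' = 0 := by omega
    simp only [CharP.cast_eq_zero, zero_mul]
    positivity
  obtain ⟨δ, rfl⟩ : ∃ δ, x = x' + δ := ⟨x - x', by omega⟩
  have hδ2 : (δ : ℚ) ≤ 2 := by exact_mod_cast (by omega : δ ≤ 2)
  have hM'Q : (M : ℚ) ≤ M' + δ * (l + 1) := by exact_mod_cast (by simpa using hM')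
  have hlQ : ((x' + δ : ℕ) : ℚ) * l ≤ M := by exact_mod_cast hl
  have hx7Q : (x' : ℚ) + δ ≤ 7 * m := by exact_mod_cast hx7
  push_cast at hM hlQ
  have hx0' : (0 : ℚ) < x' + δ := by exact_mod_cast hx0
  have hstep := mul_massBound_sub_le hm (x := x' + δ) (y := x') (by positivity) (by simp)
    hx7Q (by linarith)
  -- multiply `x λ(x) ≤ M` by `x' / x` and use `x l ≤ M`
  have hshift : (x' : ℚ) * massBound m (x' + δ) ≤ M - δ * l := by
    refine le_of_mul_le_mul_left ?_ hx0'
    nlinarith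
  nlinarith

end MassBound

section Phases

variable (m : ℕ) (p : MBPos n)

def NoBreakerEdgeInFresh : Prop :=
  ∀ e ∈ p.B, ∃ u ∈ e, u ∉ fresh p

/-- Ensures that the edges from a pour center to fresh vertices are still free. -/
def BreakerEdgesSaturated : Prop :=
  ∀ e ∈ p.B, ∃ u ∈ e, u ∉ fresh p ∧ 3 * m ≤ degIn p.B u

/-- Maker can claim an edge at only one of two hot vertices joined by a claimed edge. -/
def DoubleThreat : Prop :=
  ∃ z₁ z₂, z₁ ≠ z₂ ∧ z₁ ∈ hot m p ∧ z₂ ∈ hot m p ∧ (s(z₁, z₂) ∈ p.M ∨ s(z₁, z₂) ∈ p.B)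

structure LockPhase (z : Fin n) : Prop where
  hot_eq : hot m p = {z}
  cut_off : ∀ w ∈ fresh p, w ≠ z → s(z, w) ∈ p.M ∨ s(z, w) ∈ p.B
  breaker_edges : ∀ e ∈ p.B, ∃ u ∈ e, u ∉ fresh p ∨ u = z
  balanced : ColdBalanced m p
  cold_nonempty : (cold m p).Nonempty
  le_minColdDeg_add_card : 4 * m ≤ minColdDeg m p + #(cold m p)
  card_cold_le : #(cold m p) ≤ 3 * m

structure LowPour : Prop where
  minColdDeg_lt : minColdDeg m p < 2 * m
  saturated : BreakerEdgesSaturated m p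
  mass : (#(cold m p) : ℚ) * massBound m #(cold m p) ≤ coldMass m p

structure PourPhase : Prop where
  hot_eq : hot m p = ∅
  card_cold : 3 * m + 2 ≤ #(cold m p)
  no_fresh_edge : NoBreakerEdgeInFresh p
  balanced : ColdBalanced m p
  low_or_high : LowPour m p ∨ 2 * m ≤ minColdDeg m p

def breakerReply : MBPos n :=
  breakerMove p (breakerStrategy m p)

end Phases

section Replies

variable {m : ℕ} {q : MBPos n}

lemma IsValid.breakerReply (hn : 0 < n) (hq : IsValid q) : IsValid (breakerReply m q) := by
  obtain ⟨c, hc⟩ := breakerStrategy_subset_unclaimedAt hn m q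
  refine hq.breakerMove (fun e he => (mem_unclaimedAt.1 (hc he)).1)
    (disjoint_right.2 fun e he => (mem_unclaimedAt.1 (hc he)).2.2.1)

lemma exists_surrounded_breakerReply (h : (hot m q).Nonempty) :
    ∃ v, Surrounded (breakerReply m q) v := by
  obtain ⟨z, hz, hS⟩ := breakerStrategy_of_hot h
  refine ⟨z, ?_, ?_⟩
  · rw [breakerReply, fresh_breakerMove]
    exact hot_subset_fresh hz
  · rw [breakerReply, unclaimedAt_breakerMove, hS, sdiff_self, bot_eq_empty]

lemma NoBreakerEdgeInFresh.mk_notMem (h : NoBreakerEdgeInFresh q) {z w : Fin n}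
    (hz : z ∈ fresh q) (hw : w ∈ fresh q) : s(z, w) ∉ q.B := by
  intro hzw
  obtain ⟨u, hu, hu'⟩ := h _ hzw
  rcases Sym2.mem_iff.1 hu with rfl | rfl <;> contradiction

lemma mk_notMem_M_of_mem_fresh {z : Fin n} (hz : z ∈ fresh q) (w : Fin n) : s(z, w) ∉ q.M :=
  fun h => mem_fresh.1 hz _ h (Sym2.mem_mk_left _ _)

end Replies

section LockMove

variable {m : ℕ} {q : MBPos n}

/-- Breaker's lock move claims all edges from a fresh vertex `z` to the other fresh vertices. -/
lemma exists_lock_move (hn : 0 < n) (hq : IsValid q) (hH : hot m q = ∅)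
    (hne : (cold m q).Nonempty) (hx : #(cold m q) ≤ 3 * m + 1) (hB : NoBreakerEdgeInFresh q) :
    ∃ z ∈ cold m q, IsValid (breakerReply m q) ∧ fresh (breakerReply m q) = cold m q ∧
      degIn (breakerReply m q).B z = degIn q.B z + (#(cold m q) - 1) ∧
      (∀ w ∈ (cold m q).erase z,
        degIn (breakerReply m q).B w = degIn q.B w + 1 ∧ s(z, w) ∈ (breakerReply m q).B) ∧
      ∀ e ∈ (breakerReply m q).B, e ∈ q.B ∨ z ∈ e := by
  have hF := fresh_eq_cold_of_hot_eq_empty hH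
  have hFne : (fresh q).Nonempty := hF ▸ hne
  set z := (fresh q).min' hFne
  have hz : z ∈ fresh q := (fresh q).min'_mem hFne
  have hfree : ∀ w ∈ fresh q, w ≠ z → s(z, w) ∉ q.M ∧ s(z, w) ∉ q.B :=
    fun w hw _ => ⟨mk_notMem_M_of_mem_fresh hz w, hB.mk_notMem hz hw⟩
  have hreply : breakerReply m q = breakerMove q (((cold m q).erase z).image (s(z, ·))) := by
    rw [breakerReply, breakerStrategy_of_lock hH hFne (hF ▸ hx), claimStar_eq_image hfree, hF]
  have hdeg := degIn_breakerMove_image_mk (p := q) (notMem_erase z (cold m q))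
    (fun w hw => (hfree w (hF ▸ (mem_erase.1 hw).2) (mem_erase.1 hw).1).2)
  rw [← hreply] at hdeg
  refine ⟨z, hF ▸ hz, hq.breakerReply hn, by rw [hreply, fresh_breakerMove, hF], ?_,
    fun w hw => ⟨?_, ?_⟩, fun e he => ?_⟩
  · rw [hdeg, if_pos rfl, card_erase_of_mem (hF ▸ hz)]
  · rw [hdeg, if_neg (ne_of_mem_erase hw), if_pos hw]
  · rw [hreply, breakerMove_B]
    exact mem_union_right _ (mem_image_of_mem _ hw)
  · rw [hreply, breakerMove_B, mem_union] at he
    refine he.imp_right fun he => ?_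
    obtain ⟨w, -, rfl⟩ := mem_image.1 he
    exact Sym2.mem_mk_left _ _

/-- After the lock move the center `z` is hot; a second hot vertex is a double threat, and
otherwise the remaining cold vertices all gained one unit of Breaker degree. -/
lemma lock_step (hn : n = 7 * m) (hq : IsValid q) (hH : hot m q = ∅)
    (hne : (cold m q).Nonempty) (hx : #(cold m q) ≤ 3 * m + 1)
    (hsum : 4 * m ≤ minColdDeg m q + #(cold m q)) (hbal : ColdBalanced m q)
    (hB : NoBreakerEdgeInFresh q) :
    DoubleThreat m (breakerReply m q) ∨ ∃ z, LockPhase m (breakerReply m q) z := by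
  have hlam_lt := hq.minColdDeg_add_one_lt hn hne
  obtain ⟨z, hzC, hp', hfresh', hdegz, hother, hedges⟩ :=
    exists_lock_move (by omega) hq hH hne hx hB
  have hF : fresh q = cold m q := fresh_eq_cold_of_hot_eq_empty hH
  set F := cold m q
  set p' := breakerReply m q
  have hzhot : z ∈ hot m p' := by
    have := minColdDeg_le hzC
    rw [hp'.mem_hot_iff hn, hfresh', hdegz]
    exact ⟨hzC, by omega⟩
  by_cases hcross : ∃ w ∈ F.erase z, w ∈ hot m p'
  · obtain ⟨w, hw, hwhot⟩ := hcross
    exact Or.inl ⟨z, w, (ne_of_mem_erase hw).symm, hzhot, hwhot, Or.inr (hother w hw).2⟩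
  push Not at hcross
  have hhot' : hot m p' = {z} := by
    refine eq_singleton_iff_unique_mem.2 ⟨hzhot, fun v hv => ?_⟩
    by_contra hvz
    exact hcross v (mem_erase.2 ⟨hvz, hfresh' ▸ hot_subset_fresh hv⟩) hv
  have hcold' : cold m p' = F.erase z := by
    rw [cold_eq_fresh_sdiff_hot, hfresh', hhot', sdiff_singleton_eq_erase]
  have hcard' : #(cold m p') = #F - 1 := by rw [hcold', card_erase_of_mem hzC]
  have hne' : (cold m p').Nonempty := by
    rw [← card_pos, hcard']
    omega
  obtain ⟨hbal', hlam'⟩ := coldBalanced_of_forall (minColdDeg m q + 1) (fun v hv => by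
    rw [hcold'] at hv
    rw [(hother v hv).1]
    rcases hbal v (mem_of_mem_erase hv) with h | h <;> omega) hne'
  refine Or.inr ⟨z, ⟨hhot', ?_, ?_, hbal', hne', by omega, by omega⟩⟩
  · exact fun w hw hwz => Or.inr (hother w (mem_erase.2 ⟨hwz, hfresh' ▸ hw⟩)).2
  · intro e he
    rcases hedges e he with he | hze
    · obtain ⟨u, hu, hu'⟩ := hB e he
      exact ⟨u, hu, Or.inl (by rwa [hfresh', ← hF])⟩
    · exact ⟨z, hze, Or.inr rfl⟩

end LockMove

section PourMove

variable {m : ℕ} {q : MBPos n}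

def pourMove (m : ℕ) (q : MBPos n) (d : Fin n) : MBPos n :=
  breakerMove q ((pourTargets m q).image (s(d, ·)))

variable {d v : Fin n}

lemma pourTargets_subset_fresh : pourTargets m q ⊆ fresh q :=
  pourTargets_subset_eligible.trans (eligible_subset_cold.trans cold_subset_fresh)

lemma notMem_pourTargets (hd : d ∈ pourCenters m q) : d ∉ pourTargets m q :=
  fun h => (mem_filter.1 hd).2.1 (pourTargets_subset_fresh h)

lemma BreakerEdgesSaturated.mk_notMem (h : BreakerEdgesSaturated m q) (hd : d ∈ pourCenters m q)
    {w : Fin n} (hw : w ∈ fresh q) : s(d, w) ∉ q.B := by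
  intro hdw
  obtain ⟨u, hu, hu', hsat⟩ := h _ hdw
  have := (mem_filter.1 hd).2.2
  rcases Sym2.mem_iff.1 hu with rfl | rfl
  · omega
  · exact hu' hw

lemma breakerReply_eq_pourMove (hsat : BreakerEdgesSaturated m q) (hd : d ∈ pourCenters m q)
    (hS : breakerStrategy m q = claimStar q d (pourTargets m q)) :
    breakerReply m q = pourMove m q d := by
  have hfree : ∀ w ∈ pourTargets m q, w ≠ d → s(d, w) ∉ q.M ∧ s(d, w) ∉ q.B := fun w hw _ =>
    ⟨fun h => mem_fresh.1 (pourTargets_subset_fresh hw) _ h (Sym2.mem_mk_right _ _),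
      hsat.mk_notMem hd (pourTargets_subset_fresh hw)⟩
  rw [breakerReply, hS, claimStar_eq_image hfree, erase_eq_of_notMem (notMem_pourTargets hd),
    pourMove]

@[simp]
lemma fresh_pourMove : fresh (pourMove m q d) = fresh q := rfl

lemma isValid_pourMove (hq : IsValid q) (hd : d ∈ pourCenters m q) : IsValid (pourMove m q d) :=
  isValid_breakerMove_image_mk hq (notMem_pourTargets hd) fun _ hw h =>
    mem_fresh.1 (pourTargets_subset_fresh hw) _ h (Sym2.mem_mk_right _ _)

lemma degIn_pourMove (hsat : BreakerEdgesSaturated m q) (hd : d ∈ pourCenters m q) (v : Fin n) :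
    degIn (pourMove m q d).B v =
      degIn q.B v + if v = d then #(pourTargets m q) else if v ∈ pourTargets m q then 1 else 0 :=
  degIn_breakerMove_image_mk (notMem_pourTargets hd)
    (fun _ hw => hsat.mk_notMem hd (pourTargets_subset_fresh hw)) v

lemma degIn_pourMove_of_mem_fresh (hsat : BreakerEdgesSaturated m q) (hd : d ∈ pourCenters m q)
    (hv : v ∈ fresh q) :
    degIn (pourMove m q d).B v = degIn q.B v + if v ∈ pourTargets m q then 1 else 0 := by
  rw [degIn_pourMove hsat hd, if_neg]
  rintro rfl
  exact (mem_filter.1 hd).2.1 hv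

lemma cold_pourMove (hn : n = 7 * m) (hm : 2 ≤ m) (hq : IsValid q) (hH : hot m q = ∅)
    (hbal : ColdBalanced m q) (hlow : minColdDeg m q < 2 * m) (hsat : BreakerEdgesSaturated m q)
    (hd : d ∈ pourCenters m q) :
    hot m (pourMove m q d) = ∅ ∧ cold m (pourMove m q d) = cold m q := by
  have hq' := isValid_pourMove hq hd
  have hF := fresh_eq_cold_of_hot_eq_empty hH
  have hsmall : ∀ v ∈ cold m q, degIn (pourMove m q d).B v + 1 < 4 * m := fun v hv => by
    rw [degIn_pourMove_of_mem_fresh hsat hd (cold_subset_fresh hv)]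
    rcases hbal v hv with h | h <;> split <;> omega
  constructor
  · refine eq_empty_of_forall_notMem fun v hv => ?_
    rw [hq'.mem_hot_iff hn, fresh_pourMove, hF] at hv
    have := hsmall v hv.1
    omega
  · ext v
    rw [hq'.mem_cold_iff hn, fresh_pourMove, hF]
    exact ⟨And.left, fun hv => ⟨hv, hsmall v hv⟩⟩

/-- The targets are either all of least degree or include all eligible vertices of least
degree, so the cold degrees stay within two consecutive values. -/
lemma coldBalanced_pourMove (hcold : cold m (pourMove m q d) = cold m q) (hbal : ColdBalanced m q)
    (hlow : minColdDeg m q < 2 * m) (hsat : BreakerEdgesSaturated m q) (hd : d ∈ pourCenters m q)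
    (hne : (cold m q).Nonempty) : ColdBalanced m (pourMove m q d) := by
  have hdeg : ∀ v ∈ cold m (pourMove m q d),
      degIn (pourMove m q d).B v = degIn q.B v + if v ∈ pourTargets m q then 1 else 0 :=
    fun v hv => degIn_pourMove_of_mem_fresh hsat hd (cold_subset_fresh (hcold ▸ hv))
  rcases pourTargets_subset_or_superset (m := m) (p := q) with hT | hT
  · refine (coldBalanced_of_forall (minColdDeg m q) (fun v hv => ?_) (hcold ▸ hne)).1
    rw [hdeg v hv]
    split_ifs with hvT
    · exact Or.inr (by rw [(mem_filter.1 (hT hvT)).2])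
    · simpa using hbal v (hcold ▸ hv)
  · refine (coldBalanced_of_forall (minColdDeg m q + 1) (fun v hv => ?_) (hcold ▸ hne)).1
    rw [hdeg v hv]
    rw [hcold] at hv
    split_ifs with hvT
    · rcases hbal v hv with h | h <;> omega
    · rcases hbal v hv with h | h
      · exact absurd (hT (mem_filter.2 ⟨mem_filter.2 ⟨hv, by omega⟩, h⟩)) hvT
      · omega

lemma coldMass_pourMove (hcold : cold m (pourMove m q d) = cold m q)
    (hsat : BreakerEdgesSaturated m q) (hd : d ∈ pourCenters m q) :
    coldMass m (pourMove m q d) = coldMass m q + #(pourTargets m q) := by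
  rw [coldMass, coldMass, hcold, sum_congr rfl fun v hv =>
    degIn_pourMove_of_mem_fresh hsat hd (cold_subset_fresh hv), sum_add_distrib, ← card_filter,
    filter_mem_eq_inter, inter_eq_right.2 (pourTargets_subset_eligible.trans eligible_subset_cold)]

/-- A pour of fewer than `3m` edges reaches every eligible vertex, which lifts all cold degrees
to at least `2m`. -/
lemma two_mul_le_minColdDeg_pourMove (hcold : cold m (pourMove m q d) = cold m q)
    (hbal : ColdBalanced m q) (hsat : BreakerEdgesSaturated m q) (hd : d ∈ pourCenters m q)
    (hx : 3 * m < #(cold m q)) (hT : #(pourTargets m q) < 3 * m) :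
    2 * m ≤ minColdDeg m (pourMove m q d) := by
  have hcard := card_pourTargets (m := m) (p := q)
  have hTe : pourTargets m q = eligible m q :=
    eq_of_subset_of_card_le pourTargets_subset_eligible (by omega)
  obtain ⟨v₁, hv₁, hv₁e⟩ : ∃ v ∈ cold m q, v ∉ eligible m q := by
    by_contra! h
    have := card_le_card h
    omega
  have hlam : 2 * m ≤ minColdDeg m q + 1 := by
    have : 2 * m ≤ degIn q.B v₁ := by simpa [eligible, hv₁] using hv₁e
    rcases hbal v₁ hv₁ with h | h <;> omega
  obtain ⟨v, hv, hmin⟩ :=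
    exists_degIn_eq_minColdDeg (hcold ▸ ⟨v₁, hv₁⟩ : (cold m (pourMove m q d)).Nonempty)
  rw [hcold] at hv
  rw [← hmin, degIn_pourMove_of_mem_fresh hsat hd (cold_subset_fresh hv), hTe]
  have := minColdDeg_le hv
  by_cases hlt : degIn q.B v < 2 * m
  · rw [if_pos (show v ∈ eligible m q from mem_filter.2 ⟨hv, hlt⟩)]
    omega
  · omega

lemma noBreakerEdgeInFresh_pourMove (hB : NoBreakerEdgeInFresh q) (hd : d ∈ pourCenters m q) :
    NoBreakerEdgeInFresh (pourMove m q d) := by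
  intro e he
  rw [pourMove, breakerMove_B, mem_union] at he
  rcases he with he | he
  · exact hB e he
  · obtain ⟨w, -, rfl⟩ := mem_image.1 he
    exact ⟨d, Sym2.mem_mk_left _ _, (mem_filter.1 hd).2.1⟩

lemma breakerEdgesSaturated_pourMove (hsat : BreakerEdgesSaturated m q)
    (hd : d ∈ pourCenters m q) (hT : 3 * m ≤ #(pourTargets m q)) :
    BreakerEdgesSaturated m (pourMove m q d) := by
  have hmono : ∀ u, degIn q.B u ≤ degIn (pourMove m q d).B u := fun u => by
    rw [degIn_pourMove hsat hd]
    exact Nat.le_add_right _ _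
  intro e he
  rw [pourMove, breakerMove_B, mem_union] at he
  rcases he with he | he
  · obtain ⟨u, hu, hu', hdeg⟩ := hsat e he
    exact ⟨u, hu, hu', hdeg.trans (hmono u)⟩
  · obtain ⟨w, -, rfl⟩ := mem_image.1 he
    refine ⟨d, Sym2.mem_mk_left _ _, (mem_filter.1 hd).2.1, ?_⟩
    rw [degIn_pourMove hsat hd, if_pos rfl]
    omega

end PourMove

section Rounds

variable {m : ℕ} {p : MBPos n} {e : Sym2 (Fin n)}

lemma mem_and_unclaimed_of_killed {v : Fin n} (hv : v ∈ fresh p)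
    (hv' : v ∉ fresh (makerMove p e)) : v ∈ e ∧ e ∈ board n ∧ e ∉ p.M ∧ e ∉ p.B := by
  by_cases h : e ∈ board n ∧ e ∉ p.M ∧ e ∉ p.B
  · exact ⟨by_contra fun hve => hv' (mem_fresh_makerMove hv hve), h⟩
  · rw [makerMove_of_not_unclaimed h] at hv'
    exact absurd hv hv'

lemma NoBreakerEdgeInFresh.makerMove (h : NoBreakerEdgeInFresh p) :
    NoBreakerEdgeInFresh (makerMove p e) := by
  intro f hf
  obtain ⟨u, hu, hu'⟩ := h f (by simpa using hf)
  exact ⟨u, hu, fun h => hu' (fresh_makerMove_subset h)⟩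

lemma BreakerEdgesSaturated.makerMove (h : BreakerEdgesSaturated m p) :
    BreakerEdgesSaturated m (makerMove p e) := by
  intro f hf
  obtain ⟨u, hu, hu', hdeg⟩ := h f (by simpa using hf)
  exact ⟨u, hu, fun h => hu' (fresh_makerMove_subset h), by simpa using hdeg⟩

lemma LowPour.makerMove_of_cold_eq (h : LowPour m p) (hcold : cold m (makerMove p e) = cold m p) :
    LowPour m (makerMove p e) :=
  ⟨minColdDeg_makerMove_of_cold_eq hcold ▸ h.minColdDeg_lt, h.saturated.makerMove,
    by rw [coldMass_makerMove_of_cold_eq hcold, hcold]; exact h.mass⟩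

/-- A cold vertex killed by Maker while all cold degrees are below `2m + 1` becomes a pour
center. -/
lemma cold_makerMove_eq_of_pourCenters_eq_empty (hbal : ColdBalanced m p)
    (hlow : minColdDeg m p < 2 * m) (hc : pourCenters m (makerMove p e) = ∅) :
    cold m (makerMove p e) = cold m p := by
  refine cold_makerMove_subset.antisymm fun v hv => ?_
  by_contra hvq
  have hdead : v ∉ fresh (makerMove p e) := fun hvf =>
    hvq (by rw [cold_makerMove]; exact mem_filter.2 ⟨hv, hvf⟩)
  have : v ∈ pourCenters m (makerMove p e) := by
    refine mem_filter.2 ⟨mem_univ _, hdead, ?_⟩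
    rw [makerMove_B]
    rcases hbal v hv with h | h <;> omega
  simp [hc] at this

lemma LowPour.four_mul_add_two_le (hm : 100 ≤ m) (h : LowPour m p) (hbal : ColdBalanced m p)
    (hx : 3 * m ≤ #(cold m p)) : 4 * m + 2 ≤ #(cold m p) + minColdDeg m p := by
  have hx0 : (0 : ℚ) < #(cold m p) := by exact_mod_cast (by omega : 0 < #(cold m p))
  have hmass : (#(cold m p) : ℚ) * massBound m #(cold m p) ≤
      #(cold m p) * ((minColdDeg m p : ℚ) + 1) :=
    h.mass.trans (by exact_mod_cast hbal.coldMass_le)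
  have hbound := le_of_mul_le_mul_left hmass hx0
  have hentry := le_add_massBound hm (x := #(cold m p)) (by exact_mod_cast hx)
  have : (4 * m + 2 : ℚ) ≤ #(cold m p) + minColdDeg m p := by linarith
  exact_mod_cast this

/-- The condition for starting the lock phase holds after every Maker move. -/
lemma PourPhase.four_mul_le_makerMove (hm : 100 ≤ m) (hP : PourPhase m p) :
    4 * m ≤ minColdDeg m (makerMove p e) + #(cold m (makerMove p e)) := by
  have hx₁ : #(cold m p) ≤ #(cold m (makerMove p e)) + 2 := card_cold_le_card_cold_makerMove
  have hx₂ := hP.card_cold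
  have hlam : minColdDeg m p ≤ minColdDeg m (makerMove p e) :=
    minColdDeg_le_makerMove (by rw [← card_pos]; omega)
  rcases hP.low_or_high with hlow | hhigh
  · have := hlow.four_mul_add_two_le hm hP.balanced (by omega)
    omega
  · omega

lemma PourPhase.hot_makerMove (hP : PourPhase m p) : hot m (makerMove p e) = ∅ :=
  subset_empty.1 (hP.hot_eq ▸ hot_makerMove_subset)

lemma card_cold_le (m : ℕ) (p : MBPos n) : #(cold m p) ≤ n :=
  (card_le_univ _).trans_eq (Fintype.card_fin n)

lemma pourPhase_pourMove (hn : n = 7 * m) (hm : 100 ≤ m) (hp : IsValid p) (hP : PourPhase m p)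
    (hlow : LowPour m p) (hx : 3 * m + 2 ≤ #(cold m (makerMove p e)))
    (hlowq : minColdDeg m (makerMove p e) < 2 * m) {d : Fin n}
    (hd : d ∈ pourCenters m (makerMove p e)) :
    PourPhase m (pourMove m (makerMove p e) d) := by
  set q := makerMove p e
  have hne : (cold m q).Nonempty := by rw [← card_pos]; omega
  have hbal := hP.balanced.makerMove hne
  have hsat := hlow.saturated.makerMove (e := e)
  obtain ⟨hH', hcold'⟩ :=
    cold_pourMove hn (by omega) (hp.makerMove e) hP.hot_makerMove hbal hlowq hsat hd
  refine ⟨hH', by rwa [hcold'], noBreakerEdgeInFresh_pourMove hP.no_fresh_edge.makerMove hd,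
    coldBalanced_pourMove hcold' hbal hlowq hsat hd hne, ?_⟩
  by_cases hT : #(pourTargets m q) < 3 * m
  · exact Or.inr (two_mul_le_minColdDeg_pourMove hcold' hbal hsat hd (by omega) hT)
  by_cases hlow' : minColdDeg m (pourMove m q d) < 2 * m
  · have hT3 : #(pourTargets m q) = 3 * m := by
      have := card_pourTargets (m := m) (p := q)
      omega
    refine Or.inl ⟨hlow', breakerEdgesSaturated_pourMove hsat hd hT3.ge, ?_⟩
    rw [hcold', coldMass_pourMove hcold' hsat hd, hT3]
    push_cast
    exact mass_bound_step hm (card_le_card cold_makerMove_subset) card_cold_le_card_cold_makerMove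
      (hn ▸ card_cold_le m p) card_cold_mul_minColdDeg_le hlow.mass
      (coldMass_le_coldMass_makerMove hP.balanced)
  · exact Or.inr (by omega)

lemma breakerMove_empty (q : MBPos n) : breakerMove q ∅ = q := by
  simp [breakerMove]

lemma pourPhase_round (hn : n = 7 * m) (hm : 100 ≤ m) (hp : IsValid p) (hP : PourPhase m p)
    (e : Sym2 (Fin n)) :
    DoubleThreat m (breakerReply m (makerMove p e)) ∨
      (∃ z, LockPhase m (breakerReply m (makerMove p e)) z) ∨
      PourPhase m (breakerReply m (makerMove p e)) := by
  set q := makerMove p e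
  have hH : hot m q = ∅ := hP.hot_makerMove
  have hB : NoBreakerEdgeInFresh q := hP.no_fresh_edge.makerMove
  have hx₁ : #(cold m p) ≤ #(cold m q) + 2 := card_cold_le_card_cold_makerMove
  have hx₂ := hP.card_cold
  have hne : (cold m q).Nonempty := by rw [← card_pos]; omega
  have hbal := hP.balanced.makerMove hne
  have hlam : minColdDeg m p ≤ minColdDeg m q := minColdDeg_le_makerMove hne
  by_cases hlock : #(cold m q) ≤ 3 * m + 1
  · exact (lock_step hn (hp.makerMove e) hH hne hlock (hP.four_mul_le_makerMove hm) hbal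
      hB).imp_right Or.inl
  push Not at hlock
  refine Or.inr (Or.inr ?_)
  have hpass : breakerStrategy m q = ∅ → 2 * m ≤ minColdDeg m q ∨ LowPour m q →
      PourPhase m (breakerReply m q) := fun hS h => by
    rw [breakerReply, hS, breakerMove_empty]
    exact ⟨hH, hlock, hB, hbal, h.symm⟩
  rcases breakerStrategy_of_pour hH (by rwa [fresh_eq_cold_of_hot_eq_empty hH]) with
    ⟨d, hd, hS⟩ | ⟨hc, hS⟩
  · by_cases hlowq : minColdDeg m q < 2 * m
    · have hlow := hP.low_or_high.resolve_right (by omega)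
      rw [breakerReply_eq_pourMove hlow.saturated.makerMove hd hS]
      exact pourPhase_pourMove hn hm hp hP hlow hlock hlowq hd
    · refine hpass ?_ (Or.inl (by omega))
      rw [hS, pourTargets_eq_empty (not_lt.1 hlowq), claimStar_empty]
  · refine hpass hS ?_
    rcases hP.low_or_high with hlow | hhigh
    · exact Or.inr (hlow.makerMove_of_cold_eq
        (cold_makerMove_eq_of_pourCenters_eq_empty hP.balanced hlow.minColdDeg_lt hc))
    · exact Or.inl (hhigh.trans hlam)

/-- Maker's edge at the locked vertex `z` must go to a dead vertex, so only `z` dies. -/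
lemma LockPhase.fresh_makerMove {z : Fin n} (hL : LockPhase m p z)
    (hz : z ∉ fresh (makerMove p e)) : fresh (makerMove p e) = (fresh p).erase z := by
  have hzp : z ∈ fresh p := hot_subset_fresh (hL.hot_eq ▸ mem_singleton_self z)
  obtain ⟨hze, he⟩ := mem_and_unclaimed_of_killed hzp hz
  ext v
  refine ⟨fun hv => mem_erase.2 ⟨fun h => hz (h ▸ hv), fresh_makerMove_subset hv⟩,
    fun hv => ?_⟩
  obtain ⟨hvz, hv⟩ := mem_erase.1 hv
  refine mem_fresh_makerMove hv fun hve => ?_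
  rw [(Sym2.mem_and_mem_iff (Ne.symm hvz)).1 ⟨hze, hve⟩] at he
  rcases hL.cut_off v hv hvz with h | h
  exacts [he.2.1 h, he.2.2 h]

lemma lockPhase_round (hn : n = 7 * m) (hp : IsValid p) {z : Fin n} (hL : LockPhase m p z)
    (e : Sym2 (Fin n)) :
    (∃ v, Surrounded (breakerReply m (makerMove p e)) v) ∨
      DoubleThreat m (breakerReply m (makerMove p e)) ∨
      ∃ z', LockPhase m (breakerReply m (makerMove p e)) z' := by
  set q := makerMove p e
  have hzhot : z ∈ hot m p := hL.hot_eq ▸ mem_singleton_self z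
  by_cases hzq : z ∈ fresh q
  · exact Or.inl (exists_surrounded_breakerReply ⟨z, mem_hot_makerMove hzhot hzq⟩)
  have hfresh := hL.fresh_makerMove hzq
  have hcold : cold m q = cold m p := by
    rw [cold_makerMove, hfresh]
    refine filter_true_of_mem fun v hv => mem_erase.2 ⟨?_, cold_subset_fresh hv⟩
    rintro rfl
    exact (mem_filter.1 hv).2.not_ge (mem_filter.1 hzhot).2
  have hH : hot m q = ∅ := by
    refine eq_empty_of_forall_notMem fun v hv => ?_
    have := hL.hot_eq ▸ hot_makerMove_subset hv
    exact hzq (mem_singleton.1 this ▸ hot_subset_fresh hv)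
  have hB : NoBreakerEdgeInFresh q := fun f hf => by
    obtain ⟨u, hu, hu'⟩ := hL.breaker_edges f (by simpa [q] using hf)
    refine ⟨u, hu, fun h => ?_⟩
    rw [hfresh, mem_erase] at h
    exact hu'.elim (· h.2) (h.1 ·)
  have hlam := minColdDeg_makerMove_of_cold_eq hcold
  have hbal : ColdBalanced m q := by
    intro v hv
    rw [hlam, makerMove_B]
    exact hL.balanced v (hcold ▸ hv)
  refine Or.inr (lock_step hn (hp.makerMove e) hH (hcold ▸ hL.cold_nonempty) ?_ ?_ hbal hB)
  · rw [hcold]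
    exact hL.card_cold_le.trans (by omega)
  · rw [hcold, hlam]
    exact hL.le_minColdDeg_add_card

lemma DoubleThreat.exists_surrounded_round (h : DoubleThreat m p) (e : Sym2 (Fin n)) :
    ∃ v, Surrounded (breakerReply m (makerMove p e)) v := by
  obtain ⟨z₁, z₂, hne, h₁, h₂, hclaimed⟩ := h
  apply exists_surrounded_breakerReply
  by_cases hz₁ : z₁ ∈ fresh (makerMove p e)
  · exact ⟨z₁, mem_hot_makerMove h₁ hz₁⟩
  by_cases hz₂ : z₂ ∈ fresh (makerMove p e)
  · exact ⟨z₂, mem_hot_makerMove h₂ hz₂⟩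
  obtain ⟨hze₁, he⟩ := mem_and_unclaimed_of_killed (hot_subset_fresh h₁) hz₁
  obtain ⟨hze₂, -⟩ := mem_and_unclaimed_of_killed (hot_subset_fresh h₂) hz₂
  rw [(Sym2.mem_and_mem_iff hne).1 ⟨hze₁, hze₂⟩] at he
  exact absurd hclaimed (by tauto)

def Invariant (m : ℕ) (p : MBPos n) : Prop :=
  IsValid p ∧ ((∃ v, Surrounded p v) ∨ DoubleThreat m p ∨ (∃ z, LockPhase m p z) ∨ PourPhase m p)

lemma Invariant.breakerReply_makerMove (hn : n = 7 * m) (hm : 100 ≤ m) (h : Invariant m p)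
    (e : Sym2 (Fin n)) : Invariant m (breakerReply m (makerMove p e)) := by
  obtain ⟨hp, h⟩ := h
  refine ⟨(hp.makerMove e).breakerReply (by omega), ?_⟩
  rcases h with hwon | hthreat | ⟨z, hL⟩ | hP
  · obtain ⟨v, hv⟩ := hwon
    exact Or.inl ⟨v, (hv.makerMove e).breakerMove _⟩
  · exact Or.inl (hthreat.exists_surrounded_round e)
  · rcases lockPhase_round hn hp hL e with h | h | h
    exacts [Or.inl h, Or.inr (Or.inl h), Or.inr (Or.inr (Or.inl h))]
  · exact Or.inr (pourPhase_round hn hm hp hP e)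

lemma invariant_initial (hn : n = 7 * m) (hm : 0 < m) : Invariant m (⟨∅, ∅⟩ : MBPos n) := by
  set p₀ : MBPos n := ⟨∅, ∅⟩
  have hp₀ : IsValid p₀ := ⟨empty_subset _, empty_subset _, disjoint_empty_left _⟩
  have hfresh : fresh p₀ = univ := by ext; simp [p₀]
  have hdeg : ∀ v, degIn p₀.B v = 0 := fun v => by simp [p₀, degIn]
  have hcold : cold m p₀ = univ := by
    ext v
    simp only [hp₀.mem_cold_iff hn, hfresh, hdeg, mem_univ, true_and, iff_true]
    omega
  have hlam : minColdDeg m p₀ = 0 := by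
    obtain ⟨v, -, hv⟩ := exists_degIn_eq_minColdDeg
      (hcold ▸ ⟨⟨0, by omega⟩, mem_univ _⟩ : (cold m p₀).Nonempty)
    rw [← hv, hdeg]
  have hcard : #(cold m p₀) = 7 * m := by rw [hcold, card_univ, Fintype.card_fin, hn]
  refine ⟨hp₀, Or.inr (Or.inr (Or.inr ⟨?_, by omega, by simp [NoBreakerEdgeInFresh, p₀],
    fun v _ => Or.inl (by rw [hdeg, hlam]),
    Or.inl ⟨by omega, by simp [BreakerEdgesSaturated, p₀], ?_⟩⟩))⟩
  · refine eq_empty_of_forall_notMem fun v hv => ?_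
    rw [hp₀.mem_hot_iff hn, hdeg] at hv
    omega
  · rw [hcard, coldMass, sum_eq_zero fun v _ => hdeg v]
    push_cast
    exact mul_nonpos_of_nonneg_of_nonpos (by positivity) massBound_seven_mul_le_zero

lemma Invariant.fresh_nonempty (h : Invariant m p) : (fresh p).Nonempty := by
  obtain ⟨-, ⟨v, hv⟩ | ⟨z, -, -, hz, -⟩ | ⟨z, hL⟩ | hP⟩ := h
  · exact ⟨v, hv.1⟩
  · exact ⟨z, hot_subset_fresh hz⟩
  · exact ⟨z, hot_subset_fresh (hL.hot_eq ▸ mem_singleton_self z)⟩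
  · obtain ⟨v, hv⟩ := card_pos.1 (by have := hP.card_cold; omega : 0 < #(cold m p))
    exact ⟨v, cold_subset_fresh hv⟩

end Rounds

section Play

variable (ms : MBPos n → Sym2 (Fin n)) (bs : MBPos n → Finset (Sym2 (Fin n)))

lemma playMF_two_mul_add_two (k : ℕ) :
    playMF ms bs (2 * k + 2) =
      breakerMove (makerMove (playMF ms bs (2 * k)) (ms (playMF ms bs (2 * k))))
        (bs (makerMove (playMF ms bs (2 * k)) (ms (playMF ms bs (2 * k))))) := by
  simp [playMF, Nat.add_mod]

lemma playMF_two_mul_add_one_M (k : ℕ) :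
    (playMF ms bs (2 * k + 1)).M = (playMF ms bs (2 * k + 2)).M := by
  simp [playMF, Nat.add_mod]

lemma invariant_playMF (hn : n = 7 * m) (hm : 100 ≤ m) (k : ℕ) :
    Invariant m (playMF ms (breakerStrategy m) (2 * k)) := by
  induction k with
  | zero => exact invariant_initial hn (by omega)
  | succ k ih =>
    rw [Nat.mul_succ, playMF_two_mul_add_two]
    exact ih.breakerReply_makerMove hn hm _

lemma exists_forall_notMem_playMF (hn : n = 7 * m) (hm : 100 ≤ m) (t : ℕ) :
    ∃ v, ∀ e ∈ (playMF ms (breakerStrategy m) t).M, v ∉ e := by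
  obtain ⟨k, rfl | rfl⟩ := Nat.even_or_odd' t
  · obtain ⟨v, hv⟩ := (invariant_playMF ms hn hm k).fresh_nonempty
    exact ⟨v, mem_fresh.1 hv⟩
  · obtain ⟨v, hv⟩ := (invariant_playMF ms hn hm (k + 1)).fresh_nonempty
    rw [playMF_two_mul_add_one_M]
    exact ⟨v, mem_fresh.1 hv⟩

end Play

end

end StarBiasConnectivity

/-- for every sufficiently large multiple `n` of `7`, in the
`(1:S_b)`-biased connectivity game on `K_n` (Maker moving first), if `b ≥ 3n/7`
then Breaker has a winning strategy; hence the threshold bias satisfies `b ≤ 3n/7`. -/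
theorem star_bias_connectivity_breaker :
    ∃ N : ℕ, ∀ n, N ≤ n → 7 ∣ n → ∀ b : ℕ, 3 * n / 7 ≤ b →
      BreakerWinsMF (n := n) (StarBias b) ConnWin := by
  refine ⟨700, fun n hN hdvd b hb => ?_⟩
  obtain ⟨m, rfl⟩ := hdvd
  refine ⟨StarBiasConnectivity.breakerStrategy m,
    StarBiasConnectivity.legalBreaker_breakerStrategy (by omega) (by omega), fun ms t => ?_⟩
  obtain ⟨v, hv⟩ := StarBiasConnectivity.exists_forall_notMem_playMF ms rfl (by omega) t
  exact StarBiasConnectivity.not_connWin_of_forall_notMem (by omega) hv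
end

section
/- Let c ≥ k ≥ 2 be integers and let (a_1, t_1), …, (a_k, t_k) be pairs where a_1, …, a_k are real numbers with average ā = (a_1 + ⋯ + a_k)/k and t_1, …, t_k are natural numbers with t_i < 16 for each i. Run the following process on the multiset of surviving pairs until only one pair remains: on each turn, add c to the first coordinate of one arbitrarily chosen surviving pair and add 1 to the first coordinate of every other surviving pair; then select a pair (a, t) whose first coordinate is largest among the surviving pairs and increase its t by 1; if the new t equals 16, delete that pair, and otherwise decrease its a by 2c. The process terminates with a single remaining pair (a', t'). Then, for every sequence of choices, a' − ā ≤ c + 17k. -/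
/-- One turn of the add-and-delete process with parameter `c` on a multiset of pairs
`(a, t)` of a real and a natural number: add `c` to the first coordinate of one chosen
surviving pair and `1` to the first coordinate of every other surviving pair; then pick
a pair `(a, t)` of maximum first coordinate and increase its `t` by `1`; if the new `t`
equals `16` delete the pair, otherwise decrease its first coordinate by `2c`. -/
def PairStep (c : ℝ) (S T : Multiset (ℝ × ℕ)) : Prop :=
  ∃ x ∈ S, ∃ mid : Multiset (ℝ × ℕ),
    mid = (x.1 + c, x.2) ::ₘ (S.erase x).map (fun p => (p.1 + 1, p.2)) ∧
    ∃ y ∈ mid, (∀ z ∈ mid, z.1 ≤ y.1) ∧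
      T = if y.2 + 1 = 16 then mid.erase y
          else (y.1 - 2 * c, y.2 + 1) ::ₘ mid.erase y

namespace PairProcessAux

/-- capped excess of one pair relative to the rising waterline `A + τ`. -/
noncomputable def term (c A : ℝ) (τ : ℕ) (w : ℝ × ℕ) : ℝ :=
  min (w.1 - A - (τ : ℝ)) (2 * c * (16 - (w.2 : ℝ)))

/-- total capped excess. -/
noncomputable def Th (c A : ℝ) (τ : ℕ) (s : Multiset (ℝ × ℕ)) : ℝ :=
  (s.map (term c A τ)).sum

/-- remaining lives counter. -/
def Dd (s : Multiset (ℝ × ℕ)) : ℕ :=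
  (s.map (fun w => 16 - w.2)).sum

lemma Th_cons (c A : ℝ) (τ : ℕ) (w : ℝ × ℕ) (s : Multiset (ℝ × ℕ)) :
    Th c A τ (w ::ₘ s) = term c A τ w + Th c A τ s := by
  simp [Th]

lemma Th_erase (c A : ℝ) (τ : ℕ) {w : ℝ × ℕ} {s : Multiset (ℝ × ℕ)} (h : w ∈ s) :
    Th c A τ s = term c A τ w + Th c A τ (s.erase w) := by
  conv_lhs => rw [← Multiset.cons_erase h]
  exact Th_cons ..

lemma Th_map_shift (c A : ℝ) (τ : ℕ) (s : Multiset (ℝ × ℕ)) :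
    Th c A (τ + 1) (s.map (fun p => (p.1 + 1, p.2))) = Th c A τ s := by
  simp only [Th, Multiset.map_map]
  congr 1
  apply Multiset.map_congr rfl
  intro p hp
  simp only [Function.comp_apply, term]
  congr 1
  push_cast
  ring

lemma Dd_cons (w : ℝ × ℕ) (s : Multiset (ℝ × ℕ)) :
    Dd (w ::ₘ s) = (16 - w.2) + Dd s := by
  simp [Dd]

lemma Dd_erase {w : ℝ × ℕ} {s : Multiset (ℝ × ℕ)} (h : w ∈ s) :
    Dd s = (16 - w.2) + Dd (s.erase w) := by
  conv_lhs => rw [← Multiset.cons_erase h]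
  exact Dd_cons ..

lemma Dd_map_shift (s : Multiset (ℝ × ℕ)) :
    Dd (s.map (fun p => (p.1 + 1, p.2))) = Dd s := by
  simp only [Dd, Multiset.map_map]
  rfl

lemma min_shift_le (a b d : ℝ) (hd : 0 ≤ d) : min (a + d) b ≤ min a b + d := by
  rcases le_total a b with h | h <;> simp [min_def] <;> split_ifs <;> linarith

lemma min_shift_eq (a b d : ℝ) : min (a - d) (b - d) = min a b - d := by
  rcases le_total a b with h | h <;> simp [min_def] <;> split_ifs <;> linarith

/-- the `t`-components of survivors stay `< 16`. -/
lemma step_t16 {c : ℝ} {S T : Multiset (ℝ × ℕ)} (h : PairStep c S T)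
    (ht : ∀ w ∈ S, w.2 < 16) : ∀ w ∈ T, w.2 < 16 := by
  obtain ⟨x, hx, mid, hmid, y, hy, hymax, hT⟩ := h
  have hmidt : ∀ w ∈ mid, w.2 < 16 := by
    intro w hw
    rw [hmid] at hw
    rcases Multiset.mem_cons.mp hw with h1 | h1
    · rw [h1]; exact ht x hx
    · obtain ⟨p, hp, rfl⟩ := Multiset.mem_map.mp h1
      exact ht p (Multiset.mem_of_mem_erase hp)
  split_ifs at hT with h16
  · intro w hw
    rw [hT] at hw
    exact hmidt w (Multiset.mem_of_mem_erase hw)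
  · intro w hw
    rw [hT] at hw
    rcases Multiset.mem_cons.mp hw with h1 | h1
    · rw [h1]
      have := hmidt y hy
      simp only []
      omega
    · exact hmidt w (Multiset.mem_of_mem_erase h1)

/-- the lives counter drops by exactly one each turn. -/
lemma step_D {c : ℝ} {S T : Multiset (ℝ × ℕ)} (h : PairStep c S T)
    (ht : ∀ w ∈ S, w.2 < 16) : Dd T + 1 = Dd S := by
  obtain ⟨x, hx, mid, hmid, y, hy, hymax, hT⟩ := h
  have hmidt : ∀ w ∈ mid, w.2 < 16 := by
    intro w hw
    rw [hmid] at hw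
    rcases Multiset.mem_cons.mp hw with h1 | h1
    · rw [h1]; exact ht x hx
    · obtain ⟨p, hp, rfl⟩ := Multiset.mem_map.mp h1
      exact ht p (Multiset.mem_of_mem_erase hp)
  have hy2 : y.2 < 16 := hmidt y hy
  have hDmid : Dd mid = Dd S := by
    rw [hmid, Dd_cons, Dd_map_shift, Dd_erase hx]
  have hDer : Dd mid = (16 - y.2) + Dd (mid.erase y) := Dd_erase hy
  split_ifs at hT with h16
  · rw [hT]
    omega
  · rw [hT, Dd_cons]
    simp only []
    omega

/-- any common upper bound on first coordinates grows by at most `1` per turn. -/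
lemma step_bound {c B : ℝ} (hc : 1 ≤ c) {S T : Multiset (ℝ × ℕ)} (h : PairStep c S T)
    (hB : ∀ w ∈ S, w.1 ≤ B) : ∀ w ∈ T, w.1 ≤ B + 1 := by
  obtain ⟨x, hx, mid, hmid, y, hy, hymax, hT⟩ := h
  have hrest : ∀ w ∈ (S.erase x).map (fun p => (p.1 + 1, p.2)), w.1 ≤ B + 1 := by
    intro w hw
    obtain ⟨p, hp, rfl⟩ := Multiset.mem_map.mp hw
    have := hB p (Multiset.mem_of_mem_erase hp)
    simpa using by linarith
  have hmidall : ∀ w ∈ mid, w.1 ≤ B + c := by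
    intro w hw
    rw [hmid] at hw
    rcases Multiset.mem_cons.mp hw with h1 | h1
    · rw [h1]
      have := hB x hx
      simpa using by linarith
    · have := hrest w h1
      linarith
  have herase : ∀ w ∈ mid.erase y, w.1 ≤ B + 1 := by
    intro w hw
    by_cases hyx : y = (x.1 + c, x.2)
    · rw [hmid, hyx, Multiset.erase_cons_head] at hw
      exact hrest w hw
    · have hy' : y ∈ (S.erase x).map (fun p => (p.1 + 1, p.2)) := by
        rw [hmid] at hy
        rcases Multiset.mem_cons.mp hy with h1 | h1
        · exact absurd h1 hyx
        · exact h1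
      have hyB : y.1 ≤ B + 1 := hrest y hy'
      exact le_trans (hymax w (Multiset.mem_of_mem_erase hw)) hyB
  split_ifs at hT with h16
  · intro w hw
    rw [hT] at hw
    exact herase w hw
  · intro w hw
    rw [hT] at hw
    rcases Multiset.mem_cons.mp hw with h1 | h1
    · rw [h1]
      have := hmidall y hy
      simp only []
      linarith
    · exact herase w h1

/-- main potential step: either all survivors fall below the waterline bound,
or the potential stays nonpositive. -/
lemma step_main {c A : ℝ} (hc : 1 ≤ c) {S T : Multiset (ℝ × ℕ)} {τ : ℕ}
    (h : PairStep c S T) (hTh : Th c A τ S ≤ 0) :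
    (∀ w ∈ T, w.1 ≤ A + ((τ : ℝ) + 1) + c - 1) ∨ Th c A (τ + 1) T ≤ 0 := by
  obtain ⟨x, hx, mid, hmid, y, hy, hymax, hT⟩ := h
  -- potential of mid
  have hboost : term c A (τ + 1) (x.1 + c, x.2) ≤ term c A τ x + (c - 1) := by
    have e1 : (x.1 + c, x.2).1 - A - ((τ + 1 : ℕ) : ℝ) = (x.1 - A - (τ : ℝ)) + (c - 1) := by
      push_cast; ring
    simp only [term, e1]
    exact min_shift_le _ _ _ (by linarith)
  have hmidTh : Th c A (τ + 1) mid ≤ Th c A τ S + (c - 1) := by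
    rw [hmid, Th_cons, Th_map_shift, Th_erase c A τ hx]
    linarith
  have hmider : Th c A (τ + 1) mid
      = term c A (τ + 1) y + Th c A (τ + 1) (mid.erase y) := Th_erase c A (τ + 1) hy
  split_ifs at hT with h16
  · -- deletion turn
    have hy2 : y.2 = 15 := by omega
    by_cases hhigh : (c - 1 : ℝ) ≤ y.1 - A - ((τ + 1 : ℕ) : ℝ)
    · right
      have hterm : (c - 1 : ℝ) ≤ term c A (τ + 1) y := by
        simp only [term, hy2]
        refine le_min hhigh ?_
        push_cast
        linarith
      rw [hT]
      have := hmider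
      linarith
    · left
      push_neg at hhigh
      intro w hw
      rw [hT] at hw
      have hwy := hymax w (Multiset.mem_of_mem_erase hw)
      push_cast at hhigh ⊢
      linarith
  · -- slap turn
    right
    have hnew : term c A (τ + 1) (y.1 - 2 * c, y.2 + 1) = term c A (τ + 1) y - 2 * c := by
      have e1 : (y.1 - 2 * c, y.2 + 1).1 - A - ((τ + 1 : ℕ) : ℝ)
          = (y.1 - A - ((τ + 1 : ℕ) : ℝ)) - 2 * c := by push_cast; ring
      have e2 : 2 * c * (16 - (((y.1 - 2 * c, y.2 + 1).2 : ℕ) : ℝ))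
          = 2 * c * (16 - (y.2 : ℝ)) - 2 * c := by push_cast; ring
      simp only [term] at *
      rw [e1, e2]
      exact min_shift_eq _ _ _
    rw [hT, Th_cons, hnew]
    linarith

end PairProcessAux

/-- let `c ≥ k ≥ 2` be integers and start from a multiset of `k` pairs
`(aᵢ, tᵢ)` with the `aᵢ` real numbers of average `ā` and the `tᵢ` naturals `< 16`. Run
the pair add-and-delete process until a single pair `(a', t')` remains. Then, for every
sequence of choices, `a' − ā ≤ c + 17k`. -/
theorem pair_process_bound (k c : ℕ) (hk : 2 ≤ k) (hkc : k ≤ c)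
    (S₀ : Multiset (ℝ × ℕ)) (hcard : Multiset.card S₀ = k)
    (ht : ∀ x ∈ S₀, x.2 < 16)
    (T : ℕ) (f : ℕ → Multiset (ℝ × ℕ)) (hf0 : f 0 = S₀)
    (hstep : ∀ i < T, PairStep (c : ℝ) (f i) (f (i + 1)))
    (hone : Multiset.card (f T) = 1) :
    ∀ x ∈ f T, x.1 - (S₀.map Prod.fst).sum / (k : ℝ) ≤ (c : ℝ) + 17 * (k : ℝ) := by
  classical
  open PairProcessAux in
  set A : ℝ := (S₀.map Prod.fst).sum / (k : ℝ) with hA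
  have hk0 : (k : ℝ) ≠ 0 := by positivity
  have hc1 : (1 : ℝ) ≤ (c : ℝ) := by
    have : (2 : ℝ) ≤ (c : ℝ) := by exact_mod_cast le_trans hk hkc
    linarith
  -- base potential
  have hTh0 : Th (c : ℝ) A 0 S₀ ≤ 0 := by
    have h1 : Th (c : ℝ) A 0 S₀ ≤ (S₀.map (fun w => w.1 - A)).sum := by
      apply Multiset.sum_map_le_sum_map
      intro w hw
      simp only [term]
      have := min_le_left (w.1 - A - ((0 : ℕ) : ℝ)) (2 * (c : ℝ) * (16 - (w.2 : ℝ)))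
      exact le_trans this (by norm_num)
    have h2 : ∀ s : Multiset (ℝ × ℕ),
        (s.map (fun w => w.1 - A)).sum = (s.map Prod.fst).sum - (Multiset.card s : ℝ) * A := by
      intro s
      induction s using Multiset.induction_on with
      | empty => simp
      | cons a s ih => simp [ih]; ring
    rw [h2 S₀, hcard] at h1
    rw [hA] at h1
    rw [mul_div_cancel₀ _ hk0] at h1
    simpa using h1
  -- combined invariant
  have key : ∀ τ, τ ≤ T →
      (∀ w ∈ f τ, w.2 < 16) ∧
      (Dd (f τ) + τ = Dd S₀) ∧
      ((∀ w ∈ f τ, w.1 ≤ A + (τ : ℝ) + (c : ℝ) - 1) ∨ Th (c : ℝ) A τ (f τ) ≤ 0) := by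
    intro τ
    induction τ with
    | zero =>
      intro _
      refine ⟨by rw [hf0]; exact ht, by rw [hf0]; omega, Or.inr (by rw [hf0]; exact hTh0)⟩
    | succ n ih =>
      intro hn1
      have hn : n ≤ T := by omega
      obtain ⟨h1, h2, h3⟩ := ih hn
      have hs := hstep n (by omega)
      refine ⟨step_t16 hs h1, ?_, ?_⟩
      · have := step_D hs h1
        omega
      · rcases h3 with hb | hth
        · left
          intro w hw
          have := step_bound hc1 hs hb w hw
          push_cast
          linarith
        · rcases step_main hc1 hs hth with hb | hth'
          · left
            intro w hw
            have := hb w hw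
            push_cast
            linarith
          · right
            exact hth'
  obtain ⟨ht16, hD, hinv⟩ := key T le_rfl
  -- T is at most 16k - 1
  have hD0 : Dd S₀ ≤ 16 * k := by
    have h1 : ∀ v ∈ S₀.map (fun w => 16 - w.2), v ≤ 16 := by
      intro v hv
      obtain ⟨p, hp, rfl⟩ := Multiset.mem_map.mp hv
      omega
    have h2 := Multiset.sum_le_card_nsmul _ 16 h1
    simpa [Dd, hcard, mul_comm] using h2
  obtain ⟨w₀, hw₀⟩ := Multiset.card_eq_one.mp hone
  have hDT : 1 ≤ Dd (f T) := by
    have hw2 : w₀.2 < 16 := ht16 w₀ (by rw [hw₀]; exact Multiset.mem_singleton_self w₀)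
    have : Dd (f T) = 16 - w₀.2 := by
      rw [hw₀]
      simp [Dd]
    omega
  have hTbound : T + 1 ≤ 16 * k := by omega
  have hTR : (T : ℝ) ≤ 16 * (k : ℝ) - 1 := by
    have : ((T : ℕ) : ℝ) + 1 ≤ 16 * (k : ℝ) := by exact_mod_cast hTbound
    linarith
  have hkR : (0 : ℝ) ≤ (k : ℝ) := by positivity
  intro x hx
  rcases hinv with hb | hth
  · have := hb x hx
    have : x.1 - A ≤ (T : ℝ) + (c : ℝ) - 1 := by linarith
    linarith
  · -- f T = {w₀}, so the potential is just x's term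
    have hxw : x = w₀ := by
      rw [hw₀] at hx
      exact Multiset.mem_singleton.mp hx
    have hthx : Th (c : ℝ) A T (f T) = term (c : ℝ) A T w₀ := by
      rw [hw₀]
      simp [Th]
    have hcap : (0 : ℝ) < 2 * (c : ℝ) * (16 - (w₀.2 : ℝ)) := by
      have hw2 : w₀.2 < 16 := ht16 w₀ (by rw [hw₀]; exact Multiset.mem_singleton_self w₀)
      have : (w₀.2 : ℝ) ≤ 15 := by exact_mod_cast Nat.lt_succ_iff.mp hw2
      nlinarith
    have hmin : term (c : ℝ) A T w₀ ≤ 0 := by rw [← hthx]; exact hth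
    have hfirst : w₀.1 - A - (T : ℝ) ≤ 0 := by
      by_contra hpos
      push_neg at hpos
      have := lt_min hpos hcap
      simp only [term] at hmin
      linarith
    rw [hxw]
    linarith
end
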